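/- arXiv:math/0610278 — 6 statements merged into one kernel-verified Lean document; each statement's English description precedes it below -/
import Mathlib

section
/- Let m ≥ 1 and let x_1,…,x_m be complex numbers such that x_i + x_j ≠ 0 for all i ≠ j. Then pfaff_{1≤i,j≤m}((x_i − x_j)/(x_i + x_j)) = Π_{1≤i<j≤m} (x_i − x_j)/(x_i + x_j). (This holds for both even and odd m; the diagonal entries of the matrix are 0.) -/
/-- The pfaffian-type sum `(1/(2^M · M!)) · Σ_σ sgn(σ) · Π_{i=1}^{M} a_{σ(2i−1),σ(2i)}`
with `M = ⌊m/2⌋`. -/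
noncomputable def pfaff (m : ℕ) (A : Matrix (Fin m) (Fin m) ℂ) : ℂ :=
  (1 / ((2 : ℂ) ^ (m / 2) * (Nat.factorial (m / 2) : ℂ))) *
    ∑ σ : Equiv.Perm (Fin m), ((Equiv.Perm.sign σ : ℤ) : ℂ) *
      ∏ i : Fin (m / 2),
        A (σ ⟨2 * (i : ℕ), by have := i.isLt; omega⟩)
          (σ ⟨2 * (i : ℕ) + 1, by have := i.isLt; omega⟩)

/-!
Write `P_M(A) = ∑_σ sgn σ ∏_{i<M} a_{σ(2i),σ(2i+1)}`, so that `pfaff = P_{⌊m/2⌋} / (2^M M!)`, and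
`S(x) = ∏_{i<j} (x_i - x_j)/(x_i + x_j)`. Sorting permutations by the image of the first position
gives the expansions `P_{M+1}(A) = ∑_{p,q} ± a_{p,q} P_M(A without p, q)` and, for `m = 2M + 1`,
`P_M(A) = ∑_p ± P_M(A without p)`. The product `S` satisfies the matching identities
`S(x) = ∑_q ± (x_p - x_q)/(x_p + x_q) S(x without p, q)` for every `p` (size even) and
`S(x) = ∑_p ± S(x without p)` (size odd). Both follow from the partial fraction expansion
`∏_j (t - z_j)/(t + z_j) = 1 - 2 ∑_q z_q w_q / (t + z_q)` with
`w_q = ∏_{j ≠ q} (z_q + z_j)/(z_q - z_j)`, which at `t = 0` gives `∑_q w_q = 1` for an odd number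
of nonzero nodes. Induction on `M` yields `P_M = 2^M M! S` when `x` is injective; if `x_i = x_j`
with `i ≠ j`, the transposition `(i j)` fixes the matrix and reverses the sign of `P_M`, so both
sides vanish.
-/

open Finset Equiv Equiv.Perm

lemma neg_one_pow_mul_self {R : Type*} [Monoid R] [HasDistribNeg R] (k : ℕ) :
    (-1 : R) ^ k * (-1) ^ k = 1 := by
  rw [← pow_add, ← two_mul, pow_mul, neg_one_sq, one_pow]

namespace Fin

variable {n : ℕ}

def consPerm (p : Fin (n + 1)) (τ : Perm (Fin n)) : Perm (Fin (n + 1)) :=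
  p.cycleRange.symm * decomposeFin.symm (0, τ)

@[simp] lemma consPerm_zero (p : Fin (n + 1)) (τ : Perm (Fin n)) : consPerm p τ 0 = p := by
  simp [consPerm, decomposeFin_symm_apply_zero]

@[simp] lemma consPerm_succ (p : Fin (n + 1)) (τ : Perm (Fin n)) (j : Fin n) :
    consPerm p τ j.succ = p.succAbove (τ j) := by
  simp [consPerm, decomposeFin_symm_apply_succ]

lemma sign_consPerm (p : Fin (n + 1)) (τ : Perm (Fin n)) :
    sign (consPerm p τ) = (-1) ^ (p : ℕ) * sign τ := by
  simp [consPerm, decomposeFin.symm_sign, sign_cycleRange]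

lemma consPerm_injective :
    Function.Injective fun pτ : Fin (n + 1) × Perm (Fin n) => consPerm pτ.1 pτ.2 := by
  rintro ⟨p, τ⟩ ⟨p', τ'⟩ h
  obtain rfl : p = p' := by simpa using congr($h 0)
  have := decomposeFin.symm.injective (mul_left_cancel h)
  simp_all

lemma sum_perm_eq_sum_consPerm {M : Type*} [AddCommMonoid M] (f : Perm (Fin (n + 1)) → M) :
    ∑ σ, f σ = ∑ p, ∑ τ, f (consPerm p τ) := by
  rw [← Fintype.sum_prod_type']
  refine (Fintype.sum_bijective (fun pτ : Fin (n + 1) × Perm (Fin n) => consPerm pτ.1 pτ.2)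
    ?_ _ _ fun _ => rfl).symm
  exact (Fintype.bijective_iff_injective_and_card _).2
    ⟨consPerm_injective, by simp [Fintype.card_perm, Nat.factorial_succ]⟩

lemma prod_prod_Ioi_succAbove {R : Type*} [CommRing R] {f : Fin (n + 1) → Fin (n + 1) → R}
    (hf : ∀ i j, f i j = -f j i) (p : Fin (n + 1)) :
    ∏ i, ∏ j ∈ Ioi i, f i j = (-1) ^ (p : ℕ) * (∏ i : Fin n, f p (p.succAbove i)) *
      ∏ i : Fin n, ∏ j ∈ Ioi i, f (p.succAbove i) (p.succAbove j) := by
  have hsplit : ∏ i, ∏ j ∈ Ioi i, f (p.cycleRange.symm i) (p.cycleRange.symm j) =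
      (∏ i : Fin n, f p (p.succAbove i)) *
        ∏ i : Fin n, ∏ j ∈ Ioi i, f (p.succAbove i) (p.succAbove j) := by
    simp only [prod_univ_succ, prod_Ioi_zero, prod_Ioi_succ, cycleRange_symm_zero,
      cycleRange_symm_succ]
  have h := Perm.prod_Ioi_comp_eq_sign_mul_prod p.cycleRange.symm hf
  rw [hsplit, sign_symm, sign_cycleRange] at h
  rw [mul_assoc, h]
  push_cast
  rw [← mul_assoc, neg_one_pow_mul_self, one_mul]

end Fin

section PfaffSum

variable {R : Type*} [CommRing R]

def pfaffSum (M : ℕ) {m : ℕ} (h : 2 * M ≤ m) (A : Matrix (Fin m) (Fin m) R) : R :=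
  ∑ σ : Perm (Fin m), ((sign σ : ℤ) : R) *
    ∏ i : Fin M, A (σ ⟨2 * i, by have := i.isLt; omega⟩) (σ ⟨2 * i + 1, by have := i.isLt; omega⟩)

lemma pfaff_eq_pfaffSum (m : ℕ) (A : Matrix (Fin m) (Fin m) ℂ) :
    pfaff m A =
      (2 ^ (m / 2) * (m / 2).factorial : ℂ)⁻¹ * pfaffSum (m / 2) (Nat.mul_div_le m 2) A := by
  rw [pfaff, one_div]
  rfl

lemma pfaffSum_submatrix_perm {M m : ℕ} (h : 2 * M ≤ m) (A : Matrix (Fin m) (Fin m) R)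
    (τ : Perm (Fin m)) : pfaffSum M h (A.submatrix τ τ) = sign τ * pfaffSum M h A := by
  rw [pfaffSum, pfaffSum, mul_sum]
  conv_rhs => rw [← Equiv.sum_comp (Equiv.mulLeft τ)]
  refine sum_congr rfl fun σ _ => ?_
  simp only [coe_mulLeft, Perm.sign_mul, Perm.mul_apply, Matrix.submatrix_apply, ← mul_assoc,
    ← Int.cast_mul, ← Units.val_mul, Int.units_mul_self, one_mul]

lemma pfaffSum_eq_zero_of_submatrix_swap [NoZeroDivisors R] [NeZero (2 : R)] {M m : ℕ}
    (h : 2 * M ≤ m) (A : Matrix (Fin m) (Fin m) R) {i j : Fin m} (hij : i ≠ j)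
    (hA : A.submatrix (swap i j) (swap i j) = A) : pfaffSum M h A = 0 := by
  have hneg := pfaffSum_submatrix_perm h A (swap i j)
  rw [hA, sign_swap hij] at hneg
  push_cast at hneg
  have : (2 : R) * pfaffSum M h A = 0 := by linear_combination hneg
  exact (mul_eq_zero.1 this).resolve_left two_ne_zero

lemma pfaffSum_eq_sum_submatrix_succAbove {M n : ℕ} (h : 2 * M ≤ n)
    (A : Matrix (Fin (n + 1)) (Fin (n + 1)) R) :
    pfaffSum M (h.trans n.le_succ) A = (-1) ^ n *
      ∑ p : Fin (n + 1), (-1) ^ (p : ℕ) * pfaffSum M h (A.submatrix p.succAbove p.succAbove) := by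
  -- After precomposing with the rotation `i ↦ i + 1` the pairs occupy the positions `1, …, 2M`,
  -- so sorting by the image of position `0` isolates the index missed by the pairing.
  rw [pfaffSum, ← Equiv.sum_comp (Equiv.mulRight (finRotate (n + 1))),
    Fin.sum_perm_eq_sum_consPerm, mul_sum]
  refine sum_congr rfl fun p _ => ?_
  rw [pfaffSum, mul_sum, mul_sum]
  refine sum_congr rfl fun τ _ => ?_
  have hprod : ∏ i : Fin M, A ((p.consPerm τ * finRotate (n + 1)) ⟨2 * i, by omega⟩)
        ((p.consPerm τ * finRotate (n + 1)) ⟨2 * i + 1, by omega⟩) =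
      ∏ i : Fin M, A (p.succAbove (τ ⟨2 * i, by omega⟩))
        (p.succAbove (τ ⟨2 * i + 1, by omega⟩)) := by
    refine prod_congr rfl fun i _ => ?_
    rw [Perm.mul_apply, Perm.mul_apply, finRotate_of_lt (by omega), finRotate_of_lt (by omega)]
    exact congrArg₂ A (p.consPerm_succ τ ⟨2 * i, by omega⟩)
      (p.consPerm_succ τ ⟨2 * i + 1, by omega⟩)
  simp only [coe_mulRight, hprod, Perm.sign_mul, Fin.sign_consPerm, sign_finRotate]
  push_cast
  simp only [Matrix.submatrix_apply]
  ring

lemma pfaffSum_succ {M n : ℕ} (h : 2 * M ≤ n) (A : Matrix (Fin (n + 2)) (Fin (n + 2)) R) :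
    pfaffSum (M + 1) (by omega) A = ∑ p : Fin (n + 2), ∑ q : Fin (n + 1),
      (-1) ^ ((p : ℕ) + q) * A p (p.succAbove q) *
        pfaffSum M h (A.submatrix (p.succAbove ∘ q.succAbove) (p.succAbove ∘ q.succAbove)) := by
  rw [pfaffSum, Fin.sum_perm_eq_sum_consPerm]
  refine sum_congr rfl fun p _ => ?_
  rw [Fin.sum_perm_eq_sum_consPerm]
  refine sum_congr rfl fun q _ => ?_
  rw [pfaffSum, mul_sum]
  refine sum_congr rfl fun χ _ => ?_
  have hprod : ∏ i : Fin (M + 1), A (p.consPerm (q.consPerm χ) ⟨2 * i, by omega⟩)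
        (p.consPerm (q.consPerm χ) ⟨2 * i + 1, by omega⟩) =
      A p (p.succAbove q) * ∏ i : Fin M, A (p.succAbove (q.succAbove (χ ⟨2 * i, by omega⟩)))
        (p.succAbove (q.succAbove (χ ⟨2 * i + 1, by omega⟩))) := by
    rw [Fin.prod_univ_succ]
    congr 1
    · simp only [Fin.val_zero, mul_zero, zero_add, Fin.mk_zero, Fin.mk_one, Fin.consPerm_zero]
      rw [← Fin.succ_zero_eq_one, Fin.consPerm_succ, Fin.consPerm_zero]
    · refine prod_congr rfl fun i _ => ?_
      show A (p.consPerm (q.consPerm χ) (Fin.succ (Fin.succ ⟨2 * i, by omega⟩)))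
        (p.consPerm (q.consPerm χ) (Fin.succ (Fin.succ ⟨2 * i + 1, by omega⟩))) = _
      simp only [Fin.consPerm_succ]
  simp only [hprod, Fin.sign_consPerm]
  push_cast
  simp only [Matrix.submatrix_apply, Function.comp_apply]
  ring

end PfaffSum

section SchurWeight

variable {K : Type*} [Field K] {ι : Type*} [DecidableEq ι]

def schurWeight (s : Finset ι) (z : ι → K) (q : ι) : K :=
  ∏ j ∈ s.erase q, (z q + z j) / (z q - z j)

open Polynomial Lagrange in
theorem nodalWeight_neg_mul_prod_neg_sub {s : Finset ι} {z : ι → K} {i : ι} (hi : i ∈ s) :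
    nodalWeight s (-z) i * ∏ j ∈ s, (-z i - z j) = -2 * z i * schurWeight s z i := by
  rw [nodalWeight, ← mul_prod_erase _ _ hi, schurWeight, mul_left_comm, ← prod_mul_distrib]
  congr 1
  · ring
  · refine prod_congr rfl fun j _ => ?_
    rw [Pi.neg_apply, Pi.neg_apply, show -z i - -z j = -(z i - z j) by ring,
      show -z i - z j = -(z i + z j) by ring, inv_mul_eq_div, neg_div_neg_eq]

open Polynomial Lagrange in
theorem prod_sub_div_add_eq_one_sub_sum {s : Finset ι} {z : ι → K} (hz : Set.InjOn z s) {t : K}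
    (ht : ∀ j ∈ s, t + z j ≠ 0) :
    ∏ j ∈ s, (t - z j) / (t + z j) = 1 - 2 * ∑ q ∈ s, z q / (t + z q) * schurWeight s z q := by
  -- Lagrange interpolation of `∏ (X - z j) - ∏ (X + z j)`, of degree `< #s`, at the nodes `-z j`.
  have hdeg : (nodal s z - nodal s (-z)).degree < #s := by
    rw [← degree_nodal (s := s) (v := z)]
    exact degree_sub_lt_left (by rw [degree_nodal, degree_nodal]) nodal_ne_zero
      (by rw [nodal_monic.leadingCoeff, nodal_monic.leadingCoeff])
  have hinj : Set.InjOn (-z) s := fun a ha b hb hab => hz ha hb (neg_injective hab)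
  have key := eval_interpolate_not_at_node (fun i => (nodal s z - nodal s (-z)).eval ((-z) i))
    (v := -z) (x := t) fun i hi h => ht i hi (by rw [h, Pi.neg_apply, neg_add_cancel])
  rw [← eq_interpolate hinj hdeg] at key
  simp only [eval_sub, eval_nodal, Pi.neg_apply, sub_neg_eq_add] at key
  have hsum : ∑ i ∈ s, nodalWeight s (-z) i * (t + z i)⁻¹ *
        (∏ j ∈ s, (-z i - z j) - ∏ j ∈ s, (-z i + z j)) =
      -2 * ∑ q ∈ s, z q / (t + z q) * schurWeight s z q := by
    rw [mul_sum]
    refine sum_congr rfl fun i hi => ?_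
    rw [prod_eq_zero (f := fun j => -z i + z j) hi (neg_add_cancel _), sub_zero, mul_right_comm,
      nodalWeight_neg_mul_prod_neg_sub hi]
    ring
  rw [prod_div_distrib, div_eq_iff (prod_ne_zero_iff.2 ht)]
  linear_combination key + (∏ j ∈ s, (t + z j)) * hsum

theorem two_mul_sum_schurWeight {s : Finset ι} {z : ι → K} (hz : Set.InjOn z s)
    (h0 : ∀ j ∈ s, z j ≠ 0) : 2 * ∑ q ∈ s, schurWeight s z q = 1 - (-1) ^ #s := by
  have h := prod_sub_div_add_eq_one_sub_sum hz (t := 0) (by simpa using h0)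
  rw [prod_congr rfl fun j hj => by rw [zero_sub, zero_add, neg_div_self (h0 j hj)],
    prod_const, sum_congr rfl fun q hq => by rw [zero_add, div_self (h0 q hq), one_mul]] at h
  linear_combination h

theorem sum_schurWeight_of_odd [NeZero (2 : K)] {s : Finset ι} {z : ι → K} (hz : Set.InjOn z s)
    (hodd : Odd #s) : ∑ q ∈ s, schurWeight s z q = 1 := by
  by_cases h0 : ∀ j ∈ s, z j ≠ 0
  · have h := two_mul_sum_schurWeight hz h0
    rw [hodd.neg_one_pow] at h
    exact mul_left_cancel₀ two_ne_zero (h.trans (by ring))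
  -- A node `z k = 0` has weight `1`; it contributes a factor `1` to every other weight, and the
  -- weights of the remaining (even, nonzero) nodes sum to `0`.
  obtain ⟨k, hk, hzk⟩ : ∃ k ∈ s, z k = 0 := by simpa using h0
  have hne : ∀ j ∈ s.erase k, z j ≠ 0 := fun j hj h =>
    ne_of_mem_erase hj (hz (mem_of_mem_erase hj) hk (h.trans hzk.symm))
  have heven : Even #(s.erase k) := by
    rw [card_erase_of_mem hk]
    exact hodd.tsub_odd odd_one
  have hwk : schurWeight s z k = 1 := by
    rw [schurWeight, prod_congr rfl fun j hj => by
      rw [hzk, zero_add, zero_sub, div_neg, div_self (hne j hj)], prod_const, heven.neg_one_pow]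
  have hw : ∀ q ∈ s.erase k, schurWeight s z q = schurWeight (s.erase k) z q := fun q hq => by
    rw [schurWeight, ← mul_prod_erase (s.erase q) _ (mem_erase.2 ⟨(ne_of_mem_erase hq).symm, hk⟩),
      erase_right_comm, hzk, add_zero, sub_zero, div_self (hne q hq), one_mul, schurWeight]
  have h := two_mul_sum_schurWeight (hz.mono (coe_subset.2 (erase_subset k s))) hne
  rw [heven.neg_one_pow, sub_self, mul_eq_zero, or_iff_right two_ne_zero] at h
  rw [← add_sum_erase _ _ hk, hwk, sum_congr rfl hw, h, add_zero]

theorem sum_div_mul_schurWeight [NeZero (2 : K)] {s : Finset ι} {z : ι → K}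
    (hz : Set.InjOn z s) (hodd : Odd #s) {t : K} (ht : ∀ j ∈ s, t + z j ≠ 0) :
    ∑ q ∈ s, (t - z q) / (t + z q) * schurWeight s z q = ∏ j ∈ s, (t - z j) / (t + z j) := by
  have hsplit : ∀ q ∈ s, (t - z q) / (t + z q) * schurWeight s z q =
      schurWeight s z q - 2 * (z q / (t + z q) * schurWeight s z q) := fun q hq => by
    field_simp [ht q hq]
    ring
  rw [prod_sub_div_add_eq_one_sub_sum hz ht, sum_congr rfl hsplit, sum_sub_distrib, ← mul_sum,
    sum_schurWeight_of_odd hz hodd]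

end SchurWeight

section Schur

variable {K : Type*} [Field K] {n : ℕ}

def schurMatrix {m : ℕ} (x : Fin m → K) : Matrix (Fin m) (Fin m) K :=
  Matrix.of fun i j => (x i - x j) / (x i + x j)

def schurProd {m : ℕ} (x : Fin m → K) : K :=
  ∏ i, ∏ j ∈ Ioi i, (x i - x j) / (x i + x j)

lemma schurMatrix_submatrix {m : ℕ} (x : Fin m → K) (f : Fin n → Fin m) :
    (schurMatrix x).submatrix f f = schurMatrix (x ∘ f) := rfl

lemma schurWeight_univ_eq_prod_succAbove (x : Fin (n + 1) → K) (p : Fin (n + 1)) :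
    schurWeight univ x p =
      ∏ i : Fin n, (x p + x (p.succAbove i)) / (x p - x (p.succAbove i)) := by
  rw [schurWeight, Fin.univ_succAbove n p, erase_cons, prod_map, Fin.coe_succAboveEmb]

lemma schurWeight_mul_prod_succAbove {x : Fin (n + 1) → K} (hx : ∀ i j, i ≠ j → x i + x j ≠ 0)
    (hinj : Function.Injective x) (p : Fin (n + 1)) :
    schurWeight univ x p * ∏ i : Fin n, (x p - x (p.succAbove i)) / (x p + x (p.succAbove i)) =
      1 := by
  rw [schurWeight_univ_eq_prod_succAbove, ← prod_mul_distrib]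
  refine prod_eq_one fun i _ => ?_
  have hne : p ≠ p.succAbove i := (p.succAbove_ne i).symm
  field_simp [hx _ _ hne, sub_ne_zero.2 (hinj.ne hne)]

lemma schurProd_comp_succAbove {x : Fin (n + 1) → K} (hx : ∀ i j, i ≠ j → x i + x j ≠ 0)
    (hinj : Function.Injective x) (p : Fin (n + 1)) :
    schurProd (x ∘ p.succAbove) = (-1) ^ (p : ℕ) * schurWeight univ x p * schurProd x := by
  have h : schurProd x = (-1) ^ (p : ℕ) *
      (∏ i : Fin n, (x p - x (p.succAbove i)) / (x p + x (p.succAbove i))) *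
        schurProd (x ∘ p.succAbove) :=
    Fin.prod_prod_Ioi_succAbove (fun i j => by rw [← neg_div, neg_sub, add_comm]) p
  rw [h]
  linear_combination (-(-1) ^ (p : ℕ) * (-1) ^ (p : ℕ) * schurProd (x ∘ p.succAbove)) *
      schurWeight_mul_prod_succAbove hx hinj p -
    schurProd (x ∘ p.succAbove) * neg_one_pow_mul_self (R := K) p

lemma schurProd_eq_sum_comp_succAbove [NeZero (2 : K)] (hn : Even n) {x : Fin (n + 1) → K}
    (hx : ∀ i j, i ≠ j → x i + x j ≠ 0) (hinj : Function.Injective x) :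
    schurProd x = ∑ p : Fin (n + 1), (-1) ^ (p : ℕ) * schurProd (x ∘ p.succAbove) := by
  have hterm : ∀ p : Fin (n + 1), (-1) ^ (p : ℕ) * schurProd (x ∘ p.succAbove) =
      schurWeight univ x p * schurProd x := fun p => by
    rw [schurProd_comp_succAbove hx hinj, ← mul_assoc, ← mul_assoc, neg_one_pow_mul_self, one_mul]
  rw [sum_congr rfl fun p _ => hterm p, ← sum_mul,
    sum_schurWeight_of_odd hinj.injOn (by simpa using hn.add_one), one_mul]

lemma schurProd_eq_sum_row [NeZero (2 : K)] (hn : Even n) {x : Fin (n + 2) → K}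
    (hx : ∀ i j, i ≠ j → x i + x j ≠ 0) (hinj : Function.Injective x) (p : Fin (n + 2)) :
    schurProd x = ∑ q : Fin (n + 1), (-1) ^ ((p : ℕ) + q) *
      ((x p - x (p.succAbove q)) / (x p + x (p.succAbove q))) *
        schurProd (x ∘ p.succAbove ∘ q.succAbove) := by
  have hy : ∀ i j, i ≠ j → (x ∘ p.succAbove) i + (x ∘ p.succAbove) j ≠ 0 := fun i j hij =>
    hx _ _ (Fin.succAbove_right_injective.ne hij)
  have hyinj : Function.Injective (x ∘ p.succAbove) := hinj.comp Fin.succAbove_right_injective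
  have hterm : ∀ q : Fin (n + 1),
      (-1) ^ ((p : ℕ) + q) * ((x p - x (p.succAbove q)) / (x p + x (p.succAbove q))) *
        schurProd (x ∘ p.succAbove ∘ q.succAbove) =
      (x p - x (p.succAbove q)) / (x p + x (p.succAbove q)) *
        schurWeight univ (x ∘ p.succAbove) q * (schurWeight univ x p * schurProd x) := fun q => by
    rw [← Function.comp_assoc, schurProd_comp_succAbove hy hyinj, schurProd_comp_succAbove hx hinj]
    linear_combination (x p - x (p.succAbove q)) / (x p + x (p.succAbove q)) *
      schurWeight univ (x ∘ p.succAbove) q * schurWeight univ x p * schurProd x *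
        ((-1) ^ (q : ℕ) * (-1) ^ (q : ℕ) * neg_one_pow_mul_self (R := K) p.val +
          neg_one_pow_mul_self (R := K) q.val)
  have hsum := sum_div_mul_schurWeight (s := univ) (z := x ∘ p.succAbove) hyinj.injOn
    (by simpa using hn.add_one) (t := x p) fun j _ => hx _ _ (p.succAbove_ne j).symm
  simp only [Function.comp_apply] at hsum
  rw [sum_congr rfl fun q _ => hterm q, ← sum_mul, hsum, ← mul_assoc,
    mul_comm _ (schurWeight _ _ _), schurWeight_mul_prod_succAbove hx hinj, one_mul]

theorem pfaffSum_schurMatrix_even [NeZero (2 : K)] (M : ℕ) (x : Fin (2 * M) → K)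
    (hx : ∀ i j, i ≠ j → x i + x j ≠ 0) (hinj : Function.Injective x) :
    pfaffSum M le_rfl (schurMatrix x) = 2 ^ M * M.factorial * schurProd x := by
  induction M with
  | zero => simp [pfaffSum, schurProd]
  | succ M ih =>
    have hrow : ∀ p : Fin (2 * M + 2), ∑ q : Fin (2 * M + 1),
        (-1) ^ ((p : ℕ) + q) * schurMatrix x p (p.succAbove q) *
          pfaffSum M le_rfl (schurMatrix (x ∘ p.succAbove ∘ q.succAbove)) =
        2 ^ M * M.factorial * schurProd x := fun p => by
      rw [schurProd_eq_sum_row (even_two_mul M) hx hinj p, mul_sum]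
      refine sum_congr rfl fun q _ => ?_
      have hpq : Function.Injective (p.succAbove ∘ q.succAbove) :=
        Fin.succAbove_right_injective.comp Fin.succAbove_right_injective
      rw [ih (x ∘ p.succAbove ∘ q.succAbove) (fun i j hij => hx _ _ (hpq.ne hij))
        (hinj.comp hpq)]
      simp only [schurMatrix, Matrix.of_apply]
      ring
    rw [pfaffSum_succ le_rfl]
    simp only [schurMatrix_submatrix]
    rw [sum_congr rfl fun p _ => hrow p, sum_const, card_univ, Fintype.card_fin, nsmul_eq_mul,
      Nat.factorial_succ]
    push_cast
    ring

theorem pfaffSum_schurMatrix_odd [NeZero (2 : K)] (M : ℕ) (x : Fin (2 * M + 1) → K)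
    (hx : ∀ i j, i ≠ j → x i + x j ≠ 0) (hinj : Function.Injective x) :
    pfaffSum M (by omega) (schurMatrix x) = 2 ^ M * M.factorial * schurProd x := by
  rw [pfaffSum_eq_sum_submatrix_succAbove le_rfl, (even_two_mul M).neg_one_pow, one_mul,
    schurProd_eq_sum_comp_succAbove (even_two_mul M) hx hinj, mul_sum]
  refine sum_congr rfl fun p _ => ?_
  rw [schurMatrix_submatrix, pfaffSum_schurMatrix_even M (x ∘ p.succAbove)
    (fun i j hij => hx _ _ (Fin.succAbove_right_injective.ne hij))
    (hinj.comp Fin.succAbove_right_injective)]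
  ring

theorem pfaffSum_schurMatrix [NeZero (2 : K)] {M m : ℕ} (hm : m = 2 * M ∨ m = 2 * M + 1)
    (h : 2 * M ≤ m) (x : Fin m → K) (hx : ∀ i j, i ≠ j → x i + x j ≠ 0)
    (hinj : Function.Injective x) :
    pfaffSum M h (schurMatrix x) = 2 ^ M * M.factorial * schurProd x := by
  rcases hm with rfl | rfl
  exacts [pfaffSum_schurMatrix_even M x hx hinj, pfaffSum_schurMatrix_odd M x hx hinj]

lemma schurProd_eq_zero_of_not_injective {m : ℕ} {x : Fin m → K}
    (hinj : ¬ Function.Injective x) : schurProd x = 0 := by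
  obtain ⟨i, j, hxij, hij⟩ := Function.not_injective_iff.1 hinj
  wlog hlt : i < j generalizing i j
  · exact this j i hxij.symm hij.symm (lt_of_le_of_ne (not_lt.1 hlt) hij.symm)
  exact prod_eq_zero (mem_univ i)
    (prod_eq_zero (mem_Ioi.2 hlt) (by rw [hxij, sub_self, zero_div]))

lemma pfaffSum_schurMatrix_of_not_injective [NeZero (2 : K)] {M m : ℕ} (h : 2 * M ≤ m)
    {x : Fin m → K} (hinj : ¬ Function.Injective x) : pfaffSum M h (schurMatrix x) = 0 := by
  obtain ⟨i, j, hxij, hij⟩ := Function.not_injective_iff.1 hinj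
  refine pfaffSum_eq_zero_of_submatrix_swap h _ hij ?_
  rw [schurMatrix_submatrix]
  congr 1
  ext k
  simp only [Function.comp_apply, swap_apply_def]
  split_ifs <;> simp_all

end Schur

theorem schur_pfaffian_general (m : ℕ) (x : Fin m → ℂ)
    (hx : ∀ i j, i ≠ j → x i + x j ≠ 0) :
    pfaff m (Matrix.of fun i j => (x i - x j) / (x i + x j)) =
      ∏ i : Fin m, ∏ j ∈ Finset.Ioi i, (x i - x j) / (x i + x j) := by
  change pfaff m (schurMatrix x) = schurProd x
  rw [pfaff_eq_pfaffSum]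
  by_cases hinj : Function.Injective x
  · have hc : (2 ^ (m / 2) * (m / 2).factorial : ℂ) ≠ 0 :=
      mul_ne_zero (pow_ne_zero _ two_ne_zero) (Nat.cast_ne_zero.2 (Nat.factorial_ne_zero _))
    rw [pfaffSum_schurMatrix (by omega) _ x hx hinj, inv_mul_cancel_left₀ hc]
  · rw [pfaffSum_schurMatrix_of_not_injective _ hinj, schurProd_eq_zero_of_not_injective hinj,
      mul_zero]

/-- Schur's pfaffian evaluation:
`pfaff((x_i − x_j)/(x_i + x_j)) = Π_{i<j} (x_i − x_j)/(x_i + x_j)`. -/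
theorem schur_pfaffian (m : ℕ) (hm : 1 ≤ m) (x : Fin m → ℂ)
    (hx : ∀ i j, i ≠ j → x i + x j ≠ 0) :
    pfaff m (Matrix.of fun i j => (x i - x j) / (x i + x j)) =
      ∏ i : Fin m, ∏ j ∈ Finset.Ioi i, (x i - x j) / (x i + x j) :=
  schur_pfaffian_general m x hx
end

section
/- Let m ≥ 0, let (a_{ij})_{1≤i,j≤2m+1} be a skew-symmetric complex matrix, and let b_1,…,b_{2m+1} be complex numbers. Then pfaff_{1≤i,j≤2m+1}(a_{ij} + b_i − b_j) = pfaff_{1≤i,j≤2m+1}(a_{ij}). -/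
private lemma pfaff_cancel {n : ℕ} (k l : Fin n) (hkl : k ≠ l)
    (F : Equiv.Perm (Fin n) → ℂ)
    (hF : ∀ σ, F (σ * Equiv.swap k l) = F σ) :
    ∑ σ : Equiv.Perm (Fin n), ((Equiv.Perm.sign σ : ℤ) : ℂ) * F σ = 0 := by
  have h := Equiv.sum_comp (Equiv.mulRight (Equiv.swap k l))
      (fun σ : Equiv.Perm (Fin n) => ((Equiv.Perm.sign σ : ℤ) : ℂ) * F σ)
  simp only [Equiv.coe_mulRight, Equiv.Perm.sign_mul, Equiv.Perm.sign_swap hkl, hF,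
    Units.val_mul, Units.val_neg, Units.val_one, Int.cast_mul, Int.cast_neg, Int.cast_one,
    mul_neg_one, neg_mul] at h
  rw [Finset.sum_neg_distrib] at h
  have h2 : (2 : ℂ) * ∑ σ : Equiv.Perm (Fin n), ((Equiv.Perm.sign σ : ℤ) : ℂ) * F σ = 0 := by
    linear_combination -h
  exact (mul_eq_zero.mp h2).resolve_left two_ne_zero

private lemma pfaff_key {n M : ℕ} (P Q : Fin M → Fin n) (w : Fin n)
    (A : Matrix (Fin n) (Fin n) ℂ) (b : Fin n → ℂ)
    (hPw : ∀ i, P i ≠ w) (hQw : ∀ i, Q i ≠ w)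
    (hPQ : ∀ i j, P i ≠ Q j)
    (hPP : Function.Injective P) (hQQ : Function.Injective Q) :
    ∑ σ : Equiv.Perm (Fin n), ((Equiv.Perm.sign σ : ℤ) : ℂ) *
        ∏ i : Fin M, (A (σ (P i)) (σ (Q i)) + b (σ (P i)) - b (σ (Q i)))
    = ∑ σ : Equiv.Perm (Fin n), ((Equiv.Perm.sign σ : ℤ) : ℂ) *
        ∏ i : Fin M, A (σ (P i)) (σ (Q i)) := by
  classical
  have swap_eq : ∀ (k l : Fin n) (σ : Equiv.Perm (Fin n)) (x : Fin n), x ≠ k → x ≠ l →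
      (σ * Equiv.swap k l) x = σ x := fun k l σ x h1 h2 => by
    rw [Equiv.Perm.mul_apply, Equiv.swap_apply_of_ne_of_ne h1 h2]
  have expand : ∀ σ : Equiv.Perm (Fin n),
      ∏ i : Fin M, (A (σ (P i)) (σ (Q i)) + b (σ (P i)) - b (σ (Q i)))
      = ∑ t ∈ Finset.univ.powerset,
          (∏ j ∈ t, (b (σ (P j)) - b (σ (Q j)))) *
          ∏ j ∈ Finset.univ \ t, A (σ (P j)) (σ (Q j)) := by
    intro σ
    rw [← Finset.prod_add]
    exact Finset.prod_congr rfl fun i _ => by ring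
  simp only [expand, Finset.mul_sum]
  rw [Finset.sum_comm]
  rw [Finset.sum_eq_single_of_mem (∅ : Finset (Fin M))
    (Finset.mem_powerset.mpr (Finset.empty_subset _))]
  · simp
  · intro t _ hne
    obtain ⟨i0, hi0⟩ := Finset.nonempty_iff_ne_empty.mpr hne
    have split : ∀ σ : Equiv.Perm (Fin n),
        ((Equiv.Perm.sign σ : ℤ) : ℂ) * ((∏ j ∈ t, (b (σ (P j)) - b (σ (Q j)))) *
          ∏ j ∈ Finset.univ \ t, A (σ (P j)) (σ (Q j)))
        = ((Equiv.Perm.sign σ : ℤ) : ℂ) * (b (σ (P i0)) *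
            ((∏ j ∈ t.erase i0, (b (σ (P j)) - b (σ (Q j)))) *
              ∏ j ∈ Finset.univ \ t, A (σ (P j)) (σ (Q j))))
          - ((Equiv.Perm.sign σ : ℤ) : ℂ) * (b (σ (Q i0)) *
            ((∏ j ∈ t.erase i0, (b (σ (P j)) - b (σ (Q j)))) *
              ∏ j ∈ Finset.univ \ t, A (σ (P j)) (σ (Q j)))) := by
      intro σ
      rw [← Finset.mul_prod_erase t _ hi0]
      ring
    rw [Finset.sum_congr rfl fun σ _ => split σ, Finset.sum_sub_distrib]
    have z1 := pfaff_cancel (Q i0) w (hQw i0)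
      (fun σ => b (σ (P i0)) * ((∏ j ∈ t.erase i0, (b (σ (P j)) - b (σ (Q j)))) *
        ∏ j ∈ Finset.univ \ t, A (σ (P j)) (σ (Q j))))
      (fun σ => by
        rw [swap_eq _ _ _ _ (hPQ i0 i0) (hPw i0)]
        congr 1
        congr 1
        · exact Finset.prod_congr rfl fun j hj => by
            rw [swap_eq _ _ _ _ (hPQ j i0) (hPw j),
                swap_eq _ _ _ _ (fun h => (Finset.ne_of_mem_erase hj) (hQQ h)) (hQw j)]
        · exact Finset.prod_congr rfl fun j hj => by
            have hjt : j ∉ t := (Finset.mem_sdiff.mp hj).2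
            have hji : j ≠ i0 := fun h => hjt (h ▸ hi0)
            rw [swap_eq _ _ _ _ (hPQ j i0) (hPw j),
                swap_eq _ _ _ _ (fun h => hji (hQQ h)) (hQw j)])
    have z2 := pfaff_cancel (P i0) w (hPw i0)
      (fun σ => b (σ (Q i0)) * ((∏ j ∈ t.erase i0, (b (σ (P j)) - b (σ (Q j)))) *
        ∏ j ∈ Finset.univ \ t, A (σ (P j)) (σ (Q j))))
      (fun σ => by
        rw [swap_eq _ _ _ _ (Ne.symm (hPQ i0 i0)) (hQw i0)]
        congr 1
        congr 1
        · exact Finset.prod_congr rfl fun j hj => by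
            have hji : j ≠ i0 := Finset.ne_of_mem_erase hj
            rw [swap_eq _ _ _ _ (fun h => hji (hPP h)) (hPw j),
                swap_eq _ _ _ _ (Ne.symm (hPQ i0 j)) (hQw j)]
        · exact Finset.prod_congr rfl fun j hj => by
            have hjt : j ∉ t := (Finset.mem_sdiff.mp hj).2
            have hji : j ≠ i0 := fun h => hjt (h ▸ hi0)
            rw [swap_eq _ _ _ _ (fun h => hji (hPP h)) (hPw j),
                swap_eq _ _ _ _ (Ne.symm (hPQ i0 j)) (hQw j)])
    rw [z1, z2, sub_zero]

/-- For an odd-dimensional skew-symmetric matrix `A`,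
`pfaff(a_{ij} + b_i − b_j) = pfaff(a_{ij})`. -/
theorem pfaff_add_rank_one (m : ℕ) (A : Matrix (Fin (2 * m + 1)) (Fin (2 * m + 1)) ℂ)
    (hA : ∀ i j, A j i = -A i j) (b : Fin (2 * m + 1) → ℂ) :
    pfaff (2 * m + 1) (Matrix.of fun i j => A i j + b i - b j) = pfaff (2 * m + 1) A := by
  unfold pfaff
  congr 1
  exact pfaff_key
    (fun i => ⟨2 * (i : ℕ), by have := i.isLt; omega⟩)
    (fun i => ⟨2 * (i : ℕ) + 1, by have := i.isLt; omega⟩)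
    ⟨2 * m, by omega⟩ A b
    (fun i => by have := i.isLt; simp only [ne_eq, Fin.mk.injEq]; omega)
    (fun i => by have := i.isLt; simp only [ne_eq, Fin.mk.injEq]; omega)
    (fun i j => by simp only [ne_eq, Fin.mk.injEq]; omega)
    (fun i j h => by
      have h2 : 2 * (i : ℕ) = 2 * (j : ℕ) := congrArg Fin.val h
      exact Fin.ext (by omega))
    (fun i j h => by
      have h2 : 2 * (i : ℕ) + 1 = 2 * (j : ℕ) + 1 := congrArg Fin.val h
      exact Fin.ext (by omega))
end

section
/- Let 0 < q < 1 and let x ∈ ℂ with q < |x| < q^{−1} and x ≠ −1. Then (q;q)_∞² · θ(x;q) / ((−q;q)_∞² · θ(−x;q)) = (1 − x)/(1 + x) + 2·Σ_{k=1}^∞ (−q)^k · (x^{−k} − x^k)/(1 + q^k), the series converging absolutely. -/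
/-- The infinite q-Pochhammer symbol `(a;q)_∞ = Π_{k≥0} (1 − a q^k)`. -/
noncomputable def qPoch (q : ℝ) (a : ℂ) : ℂ := ∏' k : ℕ, (1 - a * (q : ℂ) ^ k)

/-- The theta function `θ(x;q) = (x;q)_∞ (q/x;q)_∞`. -/
noncomputable def theta (q : ℝ) (x : ℂ) : ℂ := qPoch q x * qPoch q ((q : ℂ) / x)

/-!
Write `θ(x) = (1 - x) E(x)` with `E` holomorphic and zero-free on the annulus `q < |x| < q⁻¹`;
let `S` be the right-hand side and `C = (q;q)²/(-q;q)²`. The function `D = θ(-x) S(x) - C θ(x)`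
extends holomorphically over `x = -1` and vanishes at `x = ±1`, so `h = D/θ` is holomorphic on the
annulus. Under `x ↦ qx` both `θ` and `D` acquire the factor `-1/x` (for `S` this is
`S(qx) = -S(x)`, a geometric series computation), hence `h(qx) = h(x)`. So `|h|` attains its
supremum over the annulus on a compact sub-annulus, `h` is constant by the maximum modulus
principle, and `h(-1) = 0` forces `D = 0`.
-/

open Complex Set

section

variable {q : ℝ}

lemma summable_norm_mul_ofReal_pow (hq : |q| < 1) (a : ℂ) :
    Summable fun k : ℕ => ‖a * (q : ℂ) ^ k‖ := by
  simpa [norm_mul, norm_pow] using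
    (summable_geometric_of_lt_one (abs_nonneg q) hq).mul_left ‖a‖

lemma multipliable_qPoch (hq : |q| < 1) (a : ℂ) :
    Multipliable fun k : ℕ => 1 - a * (q : ℂ) ^ k := by
  simpa [sub_eq_add_neg] using
    multipliable_one_add_of_summable (f := fun k : ℕ => -(a * (q : ℂ) ^ k))
      (by simpa using summable_norm_mul_ofReal_pow hq a)

lemma qPoch_eq_one_sub_mul (hq : |q| < 1) (a : ℂ) :
    qPoch q a = (1 - a) * qPoch q (q * a) := by
  have hshift : Multipliable fun k : ℕ => 1 - a * (q : ℂ) ^ (k + 1) :=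
    (multipliable_qPoch hq (a * q)).congr fun k => by ring
  rw [qPoch, tprod_eq_zero_mul' (f := fun k => 1 - a * (q : ℂ) ^ k) hshift, qPoch, pow_zero,
    mul_one]
  exact congrArg _ (tprod_congr fun k => by ring)

lemma qPoch_ne_zero (hq : |q| < 1) {a : ℂ} (ha : ‖a‖ < 1) : qPoch q a ≠ 0 := by
  have hf : ∀ k : ℕ, 1 + -(a * (q : ℂ) ^ k) ≠ 0 := fun k h => by
    have hle : ‖a * (q : ℂ) ^ k‖ ≤ ‖a‖ := by
      rw [norm_mul, norm_pow, norm_real, Real.norm_eq_abs]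
      exact mul_le_of_le_one_right (norm_nonneg a) (pow_le_one₀ (abs_nonneg q) hq.le)
    rw [← sub_eq_add_neg, sub_eq_zero] at h
    rw [← h, norm_one] at hle
    linarith
  simpa [qPoch, sub_eq_add_neg] using
    tprod_one_add_ne_zero_of_summable hf (by simpa using summable_norm_mul_ofReal_pow hq a)

lemma differentiable_qPoch (hq : |q| < 1) : Differentiable ℂ (qPoch q) := by
  intro a
  set U := Metric.ball (0 : ℂ) (‖a‖ + 1)
  have hprod : HasProdLocallyUniformlyOn (fun k b => 1 + -(b * (q : ℂ) ^ k)) (qPoch q) U := by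
    have := Summable.hasProdLocallyUniformlyOn_nat_one_add (K := U)
      (f := fun k b => -(b * (q : ℂ) ^ k)) (u := fun k => (‖a‖ + 1) * |q| ^ k)
      Metric.isOpen_ball
      ((summable_geometric_of_lt_one (abs_nonneg q) hq).mul_left _)
      (.of_forall fun k b hb => ?_) (fun k => by fun_prop)
    · convert this using 1
      ext b
      simp only [qPoch, sub_eq_add_neg]
    · rw [norm_neg, norm_mul, norm_pow, norm_real, Real.norm_eq_abs]
      exact mul_le_mul_of_nonneg_right (mem_ball_zero_iff.mp hb).le (by positivity)
  refine (hprod.differentiableOn (.of_forall fun s => ?_) Metric.isOpen_ball).differentiableAt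
    (Metric.isOpen_ball.mem_nhds (by simp))
  simpa [Finset.prod_fn] using DifferentiableOn.finsetProd (fun k _ => by fun_prop)

def qAnnulus (q : ℝ) : Set ℂ := {z | q < ‖z‖ ∧ ‖z‖ < q⁻¹}

lemma isOpen_qAnnulus : IsOpen (qAnnulus q) :=
  (isOpen_lt continuous_const continuous_norm).inter (isOpen_lt continuous_norm continuous_const)

lemma ne_zero_of_mem_qAnnulus (hq0 : 0 ≤ q) {z : ℂ} (hz : z ∈ qAnnulus q) : z ≠ 0 :=
  norm_pos_iff.mp (hq0.trans_lt hz.1)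

lemma neg_mem_qAnnulus {z : ℂ} (hz : z ∈ qAnnulus q) : -z ∈ qAnnulus q := by
  simpa [qAnnulus] using hz

lemma norm_ofReal_mul (hq0 : 0 ≤ q) (z : ℂ) : ‖(q : ℂ) * z‖ = q * ‖z‖ := by
  rw [norm_mul, norm_real, Real.norm_of_nonneg hq0]

lemma mul_norm_lt_one_of_mem_qAnnulus (hq0 : 0 < q) {z : ℂ} (hz : z ∈ qAnnulus q) :
    q * ‖z‖ < 1 := by
  simpa [hq0.ne'] using mul_lt_mul_of_pos_left hz.2 hq0

lemma norm_ofReal_mul_lt_one_of_mem_qAnnulus (hq0 : 0 < q) {z : ℂ} (hz : z ∈ qAnnulus q) :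
    ‖(q : ℂ) * z‖ < 1 := by
  rw [norm_ofReal_mul hq0.le]
  exact mul_norm_lt_one_of_mem_qAnnulus hq0 hz

lemma one_lt_norm_of_ofReal_mul_mem_qAnnulus (hq0 : 0 < q) {z : ℂ}
    (hqz : (q : ℂ) * z ∈ qAnnulus q) : 1 < ‖z‖ := by
  have := hqz.1
  rw [norm_ofReal_mul hq0.le] at this
  exact (lt_mul_iff_one_lt_right hq0).mp this

lemma one_mem_qAnnulus (hq0 : 0 < q) (hq1 : q < 1) : (1 : ℂ) ∈ qAnnulus q := by
  simpa [qAnnulus] using ⟨hq1, one_lt_inv₀ hq0 |>.mpr hq1⟩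

lemma isPreconnected_qAnnulus (hq0 : 0 < q) : IsPreconnected (qAnnulus q) := by
  have hstrip : exp ⁻¹' qAnnulus q = {w | Real.log q < w.re} ∩ {w | w.re < -Real.log q} := by
    ext w
    simp only [qAnnulus, mem_preimage, mem_ofPred_eq, mem_inter_iff, norm_exp,
      Real.log_lt_iff_lt_exp hq0, ← Real.log_inv, Real.lt_log_iff_exp_lt (inv_pos.mpr hq0)]
  have hrange : qAnnulus q ⊆ range exp := fun z hz => by
    rw [range_exp]; exact ne_zero_of_mem_qAnnulus hq0.le hz
  rw [← image_preimage_eq_of_subset hrange, hstrip]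
  exact ((convex_halfSpace_re_gt _).inter (convex_halfSpace_re_lt _)).isPreconnected.image _
    continuous_exp.continuousOn

theorem exists_eqOn_qAnnulus_of_norm_ofReal_mul (hq0 : 0 < q) (hq1 : q < 1) {f : ℂ → ℂ}
    (hf : DifferentiableOn ℂ f (qAnnulus q))
    (hper : ∀ z ∈ qAnnulus q, (q : ℂ) * z ∈ qAnnulus q → ‖f (q * z)‖ = ‖f z‖) :
    ∃ c, EqOn f (fun _ => c) (qAnnulus q) := by
  obtain ⟨ρ, hqρ, hρ1⟩ := exists_between hq1
  -- every orbit of `z ↦ q z` in the annulus meets this compact sub-annulus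
  set K : Set ℂ := {z | ρ ≤ ‖z‖ ∧ ‖z‖ ≤ ρ / q}
  have hρq : 1 < ρ / q := (one_lt_div hq0).mpr hqρ
  have hρq' : ρ / q < q⁻¹ := by
    rw [div_eq_mul_inv]; exact mul_lt_of_lt_one_left (by positivity) hρ1
  have hKA : K ⊆ qAnnulus q := fun z hz => ⟨hqρ.trans_le hz.1, hz.2.trans_lt hρq'⟩
  have hK : IsCompact K := by
    refine (isCompact_closedBall (0 : ℂ) (ρ / q)).of_isClosed_subset
      ((isClosed_le continuous_const continuous_norm).inter
        (isClosed_le continuous_norm continuous_const)) fun z hz => ?_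
    simpa using hz.2
  have horbit : ∀ z ∈ qAnnulus q, ∃ w ∈ K, ‖f z‖ = ‖f w‖ := by
    intro z hz
    by_cases hzρ : ‖z‖ < ρ
    · have hw : ‖z / q‖ = ‖z‖ / q := by
        rw [norm_div, norm_real, Real.norm_of_nonneg hq0.le]
      have hwK : z / q ∈ K := by
        rw [mem_ofPred_eq, hw]
        refine ⟨?_, div_le_div_of_nonneg_right hzρ.le hq0.le⟩
        exact hρ1.le.trans ((one_lt_div hq0).mpr hz.1).le
      have hqw : (q : ℂ) * (z / q) = z := mul_div_cancel₀ z (ofReal_ne_zero.mpr hq0.ne')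
      exact ⟨z / q, hwK, by simpa [hqw] using hper _ (hKA hwK) (by rwa [hqw])⟩
    by_cases hzρq : ρ / q < ‖z‖
    · have hwK : (q : ℂ) * z ∈ K := by
        rw [mem_ofPred_eq, norm_ofReal_mul hq0.le]
        exact ⟨(div_lt_iff₀' hq0).mp hzρq |>.le,
          (mul_norm_lt_one_of_mem_qAnnulus hq0 hz |>.trans hρq).le⟩
      exact ⟨q * z, hwK, (hper z hz (hKA hwK)).symm⟩
    · exact ⟨z, ⟨not_lt.mp hzρ, not_lt.mp hzρq⟩, rfl⟩
  have hρK : (ρ : ℂ) ∈ K := by simp [K, abs_of_pos (hq0.trans hqρ), (hρ1.trans hρq).le]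
  obtain ⟨c, hcK, hc⟩ := hK.exists_isMaxOn ⟨ρ, hρK⟩ (hf.continuousOn.mono hKA).norm
  refine ⟨f c, Complex.eqOn_of_isPreconnected_of_isMaxOn_norm (isPreconnected_qAnnulus hq0)
    isOpen_qAnnulus hf (hKA hcK) fun z hz => ?_⟩
  obtain ⟨w, hwK, hzw⟩ := horbit z hz
  simpa [hzw] using hc hwK

noncomputable def thetaReduced (q : ℝ) (x : ℂ) : ℂ := qPoch q (q * x) * qPoch q (q / x)

lemma theta_eq_one_sub_mul_thetaReduced (hq : |q| < 1) (x : ℂ) :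
    theta q x = (1 - x) * thetaReduced q x := by
  rw [theta, thetaReduced, qPoch_eq_one_sub_mul hq x, mul_assoc]

lemma theta_one (hq : |q| < 1) : theta q 1 = 0 := by
  simp [theta_eq_one_sub_mul_thetaReduced hq]

lemma theta_ofReal_mul (hq : |q| < 1) (hq0 : q ≠ 0) {x : ℂ} (hx : x ≠ 0) :
    theta q (q * x) = -x⁻¹ * theta q x := by
  have hq' : (q : ℂ) ≠ 0 := ofReal_ne_zero.mpr hq0
  rw [theta, theta, div_mul_cancel_left₀ hq', qPoch_eq_one_sub_mul hq x⁻¹,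
    qPoch_eq_one_sub_mul hq x, div_eq_mul_inv]
  field_simp
  ring

lemma differentiableAt_thetaReduced (hq : |q| < 1) {x : ℂ} (hx : x ≠ 0) :
    DifferentiableAt ℂ (thetaReduced q) x :=
  ((differentiable_qPoch hq).differentiableAt.comp x (by fun_prop)).mul
    ((differentiable_qPoch hq).differentiableAt.comp x ((differentiableAt_const _).div
      differentiableAt_id hx))

lemma differentiableAt_theta (hq : |q| < 1) {x : ℂ} (hx : x ≠ 0) :
    DifferentiableAt ℂ (theta q) x := by
  have : theta q = fun x => (1 - x) * thetaReduced q x :=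
    funext (theta_eq_one_sub_mul_thetaReduced hq)
  rw [this]
  exact (by fun_prop : DifferentiableAt ℂ (fun x : ℂ => 1 - x) x).mul
    (differentiableAt_thetaReduced hq hx)

lemma thetaReduced_ne_zero (hq0 : 0 < q) (hq1 : q < 1) {x : ℂ} (hx : x ∈ qAnnulus q) :
    thetaReduced q x ≠ 0 := by
  have hq : |q| < 1 := (abs_of_pos hq0).trans_lt hq1
  have hx0 := ne_zero_of_mem_qAnnulus hq0.le hx
  refine mul_ne_zero (qPoch_ne_zero hq ?_) (qPoch_ne_zero hq ?_)
  · exact norm_ofReal_mul_lt_one_of_mem_qAnnulus hq0 hx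
  · rw [norm_div, norm_real, Real.norm_of_nonneg hq0.le, div_lt_one (norm_pos_iff.mpr hx0)]
    exact hx.1

lemma theta_ne_zero (hq0 : 0 < q) (hq1 : q < 1) {x : ℂ} (hx : x ∈ qAnnulus q) (hx1 : x ≠ 1) :
    theta q x ≠ 0 := by
  rw [theta_eq_one_sub_mul_thetaReduced ((abs_of_pos hq0).trans_lt hq1)]
  exact mul_ne_zero (sub_ne_zero.mpr hx1.symm) (thetaReduced_ne_zero hq0 hq1 hx)

noncomputable def laurentTerm (q : ℝ) (x : ℂ) (k : ℕ) : ℂ :=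
  (-(q : ℂ)) ^ (k + 1) * (x ^ (-((k : ℤ) + 1)) - x ^ (k + 1)) / (1 + (q : ℂ) ^ (k + 1))

noncomputable def laurentTail (q : ℝ) (x : ℂ) : ℂ := ∑' k, laurentTerm q x k

noncomputable def thetaRatioExpansion (q : ℝ) (x : ℂ) : ℂ :=
  (1 - x) / (1 + x) + 2 * laurentTail q x

lemma zpow_neg_natCast_add_one {K : Type*} [DivisionRing K] (x : K) (k : ℕ) :
    x ^ (-((k : ℤ) + 1)) = (x ^ (k + 1))⁻¹ := by
  rw [← zpow_natCast, ← zpow_neg]; push_cast; rfl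

lemma norm_laurentTerm_le (hq0 : 0 ≤ q) (x : ℂ) (k : ℕ) :
    ‖laurentTerm q x k‖ ≤ (q / ‖x‖) ^ (k + 1) + (q * ‖x‖) ^ (k + 1) := by
  have hden : 1 ≤ ‖(1 : ℂ) + (q : ℂ) ^ (k + 1)‖ := by
    rw [← ofReal_one, ← ofReal_pow, ← ofReal_add, norm_real,
      Real.norm_of_nonneg (by positivity)]
    exact le_add_of_nonneg_right (by positivity)
  calc ‖laurentTerm q x k‖
      = q ^ (k + 1) * ‖x ^ (-((k : ℤ) + 1)) - x ^ (k + 1)‖ /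
          ‖(1 : ℂ) + (q : ℂ) ^ (k + 1)‖ := by
        rw [laurentTerm, norm_div, norm_mul, norm_pow, norm_neg, norm_real,
          Real.norm_of_nonneg hq0]
    _ ≤ q ^ (k + 1) * (‖x‖⁻¹ ^ (k + 1) + ‖x‖ ^ (k + 1)) := by
        refine (div_le_self (by positivity) hden).trans
          (mul_le_mul_of_nonneg_left ?_ (by positivity))
        refine (norm_sub_le _ _).trans_eq ?_
        rw [zpow_neg_natCast_add_one, norm_inv, norm_pow, inv_pow]
    _ = (q / ‖x‖) ^ (k + 1) + (q * ‖x‖) ^ (k + 1) := by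
        rw [div_eq_mul_inv, mul_pow, mul_pow]; ring

lemma summable_pow_succ_add_pow_succ {a b : ℝ} (ha0 : 0 ≤ a) (ha1 : a < 1) (hb0 : 0 ≤ b)
    (hb1 : b < 1) : Summable fun k : ℕ => a ^ (k + 1) + b ^ (k + 1) :=
  ((summable_nat_add_iff 1).mpr (summable_geometric_of_lt_one ha0 ha1)).add
    ((summable_nat_add_iff 1).mpr (summable_geometric_of_lt_one hb0 hb1))

lemma summable_laurentTerm (hq0 : 0 < q) {x : ℂ} (hx : x ∈ qAnnulus q) :
    Summable (laurentTerm q x) :=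
  .of_norm_bounded (summable_pow_succ_add_pow_succ (by positivity)
    ((div_lt_one (hq0.trans hx.1)).mpr hx.1) (by positivity)
    (mul_norm_lt_one_of_mem_qAnnulus hq0 hx)) (norm_laurentTerm_le hq0.le x)

lemma differentiableOn_laurentTail (hq0 : 0 < q) :
    DifferentiableOn ℂ (laurentTail q) (qAnnulus q) := by
  intro x hx
  obtain ⟨r, hqr, hrx⟩ := exists_between hx.1
  obtain ⟨R, hxR, hRq⟩ := exists_between hx.2
  set U : Set ℂ := {z | r < ‖z‖ ∧ ‖z‖ < R}
  have hU : IsOpen U :=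
    (isOpen_lt continuous_const continuous_norm).inter (isOpen_lt continuous_norm continuous_const)
  have hUA : U ⊆ qAnnulus q := fun z hz => ⟨hqr.trans hz.1, hz.2.trans hRq⟩
  have hsum : DifferentiableOn ℂ (laurentTail q) U := by
    have hr0 : 0 < r := hq0.trans hqr
    refine differentiableOn_tsum_of_summable_norm
      (summable_pow_succ_add_pow_succ (a := q / r) (b := q * R)
        (div_nonneg hq0.le hr0.le) ((div_lt_one hr0).mpr hqr)
        (mul_nonneg hq0.le ((norm_nonneg x).trans hxR.le)) ?_)
      (fun k z hz => ?_) hU fun k z hz => (norm_laurentTerm_le hq0.le z k).trans ?_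
    · simpa [hq0.ne'] using mul_lt_mul_of_pos_left hRq hq0
    · have hz0 : z ≠ 0 := norm_pos_iff.mp (hr0.trans hz.1)
      refine DifferentiableAt.differentiableWithinAt (.div_const (.const_mul ?_ _) _)
      exact (differentiableAt_zpow.mpr (.inl hz0)).sub (differentiableAt_pow _)
    · gcongr
      · exact hz.1.le
      · exact hz.2.le
  exact (hsum.differentiableAt (hU.mem_nhds ⟨hrx, hxR⟩)).differentiableWithinAt

lemma laurentTail_one : laurentTail q 1 = 0 := by
  simp [laurentTail, laurentTerm]

lemma laurentTerm_add_laurentTerm_ofReal_mul (hq0 : 0 < q) {x : ℂ} (hx : x ≠ 0) (k : ℕ) :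
    laurentTerm q x k + laurentTerm q (q * x) k =
      -x⁻¹ * (-x⁻¹) ^ k - -(q * x) * (-(q * x)) ^ k := by
  have hden : (1 : ℂ) + (q : ℂ) ^ (k + 1) ≠ 0 := by
    rw [← ofReal_one, ← ofReal_pow, ← ofReal_add, ofReal_ne_zero]; positivity
  have hq : (q : ℂ) ≠ 0 := ofReal_ne_zero.mpr hq0.ne'
  simp only [laurentTerm, zpow_neg_natCast_add_one, mul_pow, neg_pow (x⁻¹), inv_pow]
  field_simp
  ring

lemma one_add_ne_zero_of_norm_ne_one {R : Type*} [SeminormedRing R] [NormOneClass R] {z : R}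
    (hz : ‖z‖ ≠ 1) : 1 + z ≠ 0 := fun h => by
  rw [eq_neg_of_add_eq_zero_right h, norm_neg, norm_one] at hz
  exact hz rfl

lemma thetaRatioExpansion_ofReal_mul (hq0 : 0 < q) {x : ℂ} (hx : x ∈ qAnnulus q)
    (hqx : (q : ℂ) * x ∈ qAnnulus q) :
    thetaRatioExpansion q (q * x) = -thetaRatioExpansion q x := by
  have hx1 : 1 < ‖x‖ := one_lt_norm_of_ofReal_mul_mem_qAnnulus hq0 hqx
  have hx0 : x ≠ 0 := norm_pos_iff.mp (one_pos.trans hx1)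
  have hqx1 := norm_ofReal_mul_lt_one_of_mem_qAnnulus hq0 hx
  have hxinv : ‖-x⁻¹‖ < 1 := by rw [norm_neg, norm_inv]; exact inv_lt_one_of_one_lt₀ hx1
  have hsum : HasSum (fun k => laurentTerm q x k + laurentTerm q (q * x) k)
      (-x⁻¹ * (1 - -x⁻¹)⁻¹ - -(q * x) * (1 - -(q * x))⁻¹) := by
    simpa only [laurentTerm_add_laurentTerm_ofReal_mul hq0 hx0] using
      ((hasSum_geometric_of_norm_lt_one hxinv).mul_left (-x⁻¹)).sub
        ((hasSum_geometric_of_norm_lt_one (by rwa [norm_neg])).mul_left (-(q * x)))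
  have htail : laurentTail q x + laurentTail q (q * x) = _ :=
    ((summable_laurentTerm hq0 hx).hasSum.add (summable_laurentTerm hq0 hqx).hasSum).unique hsum
  have h1 : (1 : ℂ) + x ≠ 0 := one_add_ne_zero_of_norm_ne_one hx1.ne'
  have h2 : (1 : ℂ) + q * x ≠ 0 := one_add_ne_zero_of_norm_ne_one hqx1.ne
  have hgeom : -x⁻¹ * (1 - -x⁻¹)⁻¹ = -(1 + x)⁻¹ := by
    rw [sub_neg_eq_add, neg_mul, ← mul_inv, mul_add, mul_one, mul_inv_cancel₀ hx0, add_comm]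
  rw [hgeom, sub_neg_eq_add] at htail
  unfold thetaRatioExpansion
  rw [eq_sub_of_add_eq' htail]
  field_simp
  ring

/-- `θ(-x) S(x) - C θ(x)` for the right-hand side `S` of the expansion and
`C = (q;q)²/(-q;q)²`, written so that the pole of `S` at `-1` is cancelled. -/
noncomputable def thetaDefect (q : ℝ) (x : ℂ) : ℂ :=
  (1 - x) * thetaReduced q (-x) + 2 * theta q (-x) * laurentTail q x -
    qPoch q q ^ 2 / qPoch q (-q) ^ 2 * theta q x

lemma thetaDefect_eq (hq : |q| < 1) {x : ℂ} (hx : x ≠ -1) :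
    thetaDefect q x = theta q (-x) * thetaRatioExpansion q x -
      qPoch q q ^ 2 / qPoch q (-q) ^ 2 * theta q x := by
  have h1 : (1 : ℂ) + x ≠ 0 := fun h => hx (eq_neg_of_add_eq_zero_right h)
  rw [thetaDefect, thetaRatioExpansion, theta_eq_one_sub_mul_thetaReduced hq (-x), sub_neg_eq_add]
  field_simp

lemma thetaDefect_one (hq : |q| < 1) : thetaDefect q 1 = 0 := by
  simp [thetaDefect, laurentTail_one, theta_one hq]

lemma qPoch_neg_ne_zero (hq : |q| < 1) : qPoch q (-q) ≠ 0 :=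
  qPoch_ne_zero hq (by rwa [norm_neg, norm_real, Real.norm_eq_abs])

lemma thetaDefect_neg_one (hq : |q| < 1) : thetaDefect q (-1) = 0 := by
  have hP := qPoch_neg_ne_zero hq
  rw [thetaDefect, neg_neg, theta_one hq, theta_eq_one_sub_mul_thetaReduced hq, thetaReduced,
    thetaReduced]
  simp only [mul_one, div_one, mul_neg, div_neg]
  field_simp
  ring

lemma thetaDefect_ofReal_mul (hq0 : 0 < q) (hq1 : q < 1) {x : ℂ} (hx : x ∈ qAnnulus q)
    (hqx : (q : ℂ) * x ∈ qAnnulus q) :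
    thetaDefect q (q * x) = -x⁻¹ * thetaDefect q x := by
  have hq : |q| < 1 := (abs_of_pos hq0).trans_lt hq1
  have hx1 : 1 < ‖x‖ := one_lt_norm_of_ofReal_mul_mem_qAnnulus hq0 hqx
  have hx0 : x ≠ 0 := norm_pos_iff.mp (one_pos.trans hx1)
  have hqx1 := norm_ofReal_mul_lt_one_of_mem_qAnnulus hq0 hx
  have hxm : x ≠ -1 := fun h => by simp [h] at hx1
  have hqxm : (q : ℂ) * x ≠ -1 := fun h => by simp [h] at hqx1
  have hθ : theta q (-(q * x)) = x⁻¹ * theta q (-x) := by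
    rw [← mul_neg, theta_ofReal_mul hq hq0.ne' (neg_ne_zero.mpr hx0), inv_neg, neg_neg]
  rw [thetaDefect_eq hq hxm, thetaDefect_eq hq hqxm, hθ, theta_ofReal_mul hq hq0.ne' hx0,
    thetaRatioExpansion_ofReal_mul hq0 hx hqx]
  ring

lemma differentiableOn_thetaDefect (hq0 : 0 < q) (hq1 : q < 1) :
    DifferentiableOn ℂ (thetaDefect q) (qAnnulus q) := by
  have hq : |q| < 1 := (abs_of_pos hq0).trans_lt hq1
  intro x hx
  have hx0 := ne_zero_of_mem_qAnnulus hq0.le hx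
  have hmx0 : -x ≠ 0 := neg_ne_zero.mpr hx0
  have hT := (differentiableOn_laurentTail hq0).differentiableAt (isOpen_qAnnulus.mem_nhds hx)
  refine DifferentiableAt.differentiableWithinAt ?_
  have hE : DifferentiableAt ℂ (fun z => thetaReduced q (-z)) x :=
    (differentiableAt_thetaReduced hq hmx0).comp x differentiableAt_id.neg
  have hθ' : DifferentiableAt ℂ (fun z => theta q (-z)) x :=
    (differentiableAt_theta hq hmx0).comp x differentiableAt_id.neg
  have hθ := differentiableAt_theta hq hx0
  unfold thetaDefect
  fun_prop

/-- `thetaDefect q / theta q`, with its removable singularity at the zero `x = 1` of `θ`. -/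
noncomputable def thetaDefectQuot (q : ℝ) (x : ℂ) : ℂ :=
  -dslope (thetaDefect q) 1 x / thetaReduced q x

lemma theta_mul_thetaDefectQuot (hq : |q| < 1) {x : ℂ} (hx : thetaReduced q x ≠ 0) :
    theta q x * thetaDefectQuot q x = thetaDefect q x := by
  rcases eq_or_ne x 1 with rfl | hx1
  · rw [theta_one hq, thetaDefect_one hq, zero_mul]
  · rw [thetaDefectQuot, dslope_of_ne _ hx1, slope_def_field, thetaDefect_one hq, sub_zero,
      theta_eq_one_sub_mul_thetaReduced hq]
    have : x - 1 ≠ 0 := sub_ne_zero.mpr hx1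
    field_simp
    ring

lemma differentiableOn_thetaDefectQuot (hq0 : 0 < q) (hq1 : q < 1) :
    DifferentiableOn ℂ (thetaDefectQuot q) (qAnnulus q) := by
  have hq : |q| < 1 := (abs_of_pos hq0).trans_lt hq1
  have hD := (differentiableOn_dslope (isOpen_qAnnulus.mem_nhds (one_mem_qAnnulus hq0 hq1))).mpr
    (differentiableOn_thetaDefect hq0 hq1)
  exact hD.neg.div (fun x hx => (differentiableAt_thetaReduced hq
    (ne_zero_of_mem_qAnnulus hq0.le hx)).differentiableWithinAt)
    fun x hx => thetaReduced_ne_zero hq0 hq1 hx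

lemma thetaDefectQuot_ofReal_mul (hq0 : 0 < q) (hq1 : q < 1) {x : ℂ} (hx : x ∈ qAnnulus q)
    (hqx : (q : ℂ) * x ∈ qAnnulus q) :
    thetaDefectQuot q (q * x) = thetaDefectQuot q x := by
  have hq : |q| < 1 := (abs_of_pos hq0).trans_lt hq1
  have hx0 := ne_zero_of_mem_qAnnulus hq0.le hx
  have hx1 : x ≠ 1 := fun h => by
    simpa [h] using one_lt_norm_of_ofReal_mul_mem_qAnnulus hq0 hqx
  have hθ : -x⁻¹ * theta q x ≠ 0 :=
    mul_ne_zero (neg_ne_zero.mpr (inv_ne_zero hx0)) (theta_ne_zero hq0 hq1 hx hx1)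
  have h := theta_mul_thetaDefectQuot hq (thetaReduced_ne_zero hq0 hq1 hqx)
  rw [thetaDefect_ofReal_mul hq0 hq1 hx hqx, theta_ofReal_mul hq hq0.ne' hx0,
    ← theta_mul_thetaDefectQuot hq (thetaReduced_ne_zero hq0 hq1 hx), ← mul_assoc] at h
  exact mul_left_cancel₀ hθ h

lemma thetaDefectQuot_neg_one (hq0 : 0 < q) (hq1 : q < 1) : thetaDefectQuot q (-1) = 0 := by
  have hq : |q| < 1 := (abs_of_pos hq0).trans_lt hq1
  have hA := neg_mem_qAnnulus (one_mem_qAnnulus hq0 hq1)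
  have h := theta_mul_thetaDefectQuot hq (thetaReduced_ne_zero hq0 hq1 hA)
  rw [thetaDefect_neg_one hq] at h
  exact (mul_eq_zero.mp h).resolve_left (theta_ne_zero hq0 hq1 hA (by norm_num))

lemma thetaDefect_eq_zero (hq0 : 0 < q) (hq1 : q < 1) {x : ℂ} (hx : x ∈ qAnnulus q) :
    thetaDefect q x = 0 := by
  obtain ⟨c, hc⟩ := exists_eqOn_qAnnulus_of_norm_ofReal_mul hq0 hq1
    (differentiableOn_thetaDefectQuot hq0 hq1)
    fun z hz hqz => by rw [thetaDefectQuot_ofReal_mul hq0 hq1 hz hqz]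
  have hc0 : c = 0 :=
    (hc (neg_mem_qAnnulus (one_mem_qAnnulus hq0 hq1))).symm.trans
      (thetaDefectQuot_neg_one hq0 hq1)
  rw [← theta_mul_thetaDefectQuot ((abs_of_pos hq0).trans_lt hq1)
    (thetaReduced_ne_zero hq0 hq1 hx), hc hx, hc0, mul_zero]

lemma theta_ratio_eq_thetaRatioExpansion (hq0 : 0 < q) (hq1 : q < 1) {x : ℂ}
    (hx : x ∈ qAnnulus q) (hxm : x ≠ -1) :
    qPoch q q ^ 2 * theta q x / (qPoch q (-q) ^ 2 * theta q (-x)) = thetaRatioExpansion q x := by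
  have hq : |q| < 1 := (abs_of_pos hq0).trans_lt hq1
  have hD := thetaDefect_eq_zero hq0 hq1 hx
  rw [thetaDefect_eq hq hxm] at hD
  have hP := qPoch_neg_ne_zero hq
  have hθ : theta q (-x) ≠ 0 :=
    theta_ne_zero hq0 hq1 (neg_mem_qAnnulus hx) fun h => hxm (neg_eq_iff_eq_neg.mp h)
  field_simp at hD ⊢
  linear_combination -hD

end

/-- For `q < |x| < q⁻¹`, `x ≠ −1`:
`(q;q)_∞² θ(x;q)/((−q;q)_∞² θ(−x;q)) = (1−x)/(1+x) + 2 Σ_{k≥1} (−q)^k (x^{−k} − x^k)/(1+q^k)`,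
the series converging absolutely. -/
theorem laurent_expansion_even (q : ℝ) (hq0 : 0 < q) (hq1 : q < 1) (x : ℂ)
    (hx1 : q < ‖x‖) (hx2 : ‖x‖ < q⁻¹) (hxm : x ≠ -1) :
    Summable (fun k : ℕ =>
      (-(q : ℂ)) ^ (k + 1) * (x ^ (-((k : ℤ) + 1)) - x ^ (k + 1)) / (1 + (q : ℂ) ^ (k + 1))) ∧
    qPoch q (q : ℂ) ^ 2 * theta q x / (qPoch q (-(q : ℂ)) ^ 2 * theta q (-x)) =
      (1 - x) / (1 + x) +
        2 * ∑' k : ℕ,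
          (-(q : ℂ)) ^ (k + 1) * (x ^ (-((k : ℤ) + 1)) - x ^ (k + 1)) /
            (1 + (q : ℂ) ^ (k + 1)) :=
  ⟨summable_laurentTerm hq0 ⟨hx1, hx2⟩,
    theta_ratio_eq_thetaRatioExpansion hq0 hq1 ⟨hx1, hx2⟩ hxm⟩
end

section
/- Let m ≥ 1 be an integer. If m is even, then lim_{t→1⁻} Σ_{k=1}^∞ (−1)^{k+1} t^k k^m = 0. If m = 2n − 1 is odd, then lim_{t→1⁻} Σ_{k=1}^∞ (−1)^{k+1} t^k k^m = (−1)^{n+1} t_n / 2. (For each 0 < t < 1 the series converges absolutely.) -/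
/-!
For a real polynomial `p` put `A_p(t) = ∑ₖ (-t)^k p(k)`, `|t| < 1`. Shifting the index gives
`A_p(t) + t A_{p(x+1)}(t) = p(0)`. Since `p(x+1) - p(x)` has smaller degree, induction on the
degree shows that `A_p(t)` has a limit as `t → 1⁻`, and then the same identity shows that this
limit is `q(0)` whenever `q(x) + q(x+1) = p(x)`. For `p = (x+1)^m` one takes `q(x) = E_m(x+1)/2`,
where the Euler polynomial `E_m(x) = 2^{m+1}/(m+1) (B_{m+1}((x+1)/2) - B_{m+1}(x/2))` satisfies
`E_m(x) + E_m(x+1) = 2x^m`; evaluating `B_{m+1}` at `1` and `1/2` gives the limit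
`(2^{m+1} - 1) B_{m+1}/(m+1)`. It vanishes for even `m ≥ 2`, and for `m = 2n - 1` the sign
`(-1)^{n+1}` of `B_{2n}` comes from `ζ(2n) > 0`.
-/

/-- The tangent numbers `t_n = (4^n − 1)|B_{2n}|/n`, so that
`tan(x/2) = Σ_{n≥1} t_n x^{2n−1}/(2n−1)!`. -/
noncomputable def tangentNum (n : ℕ) : ℝ :=
  ((4 : ℝ) ^ n - 1) * |((bernoulli (2 * n) : ℚ) : ℝ)| / n

open Polynomial hiding bernoulli
open Filter Topology

noncomputable def alternatingSeries (p : ℝ[X]) (t : ℝ) : ℝ :=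
  ∑' k : ℕ, (-t) ^ k * p.eval (k : ℝ)

section AlternatingSeries

variable {t : ℝ}

theorem summable_neg_pow_mul_eval (p : ℝ[X]) (ht : |t| < 1) :
    Summable fun k : ℕ => (-t) ^ k * p.eval (k : ℝ) := by
  have hnorm : ‖-t‖ < 1 := by rwa [norm_neg, Real.norm_eq_abs]
  simp_rw [eval_eq_sum_range, Finset.mul_sum]
  refine summable_sum fun i _ => ?_
  exact ((summable_pow_mul_geometric_of_norm_lt_one i hnorm).mul_left (p.coeff i)).congr
    fun k => by ring

theorem alternatingSeries_add (p q : ℝ[X]) (ht : |t| < 1) :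
    alternatingSeries (p + q) t = alternatingSeries p t + alternatingSeries q t := by
  simp only [alternatingSeries, eval_add, mul_add]
  exact (summable_neg_pow_mul_eval p ht).tsum_add (summable_neg_pow_mul_eval q ht)

theorem alternatingSeries_add_mul_taylor_one (p : ℝ[X]) (ht : |t| < 1) :
    alternatingSeries p t + t * alternatingSeries (taylor 1 p) t = p.eval 0 := by
  have hshift : ∀ k : ℕ, (-t) ^ (k + 1) * p.eval ((k + 1 : ℕ) : ℝ)
      = -(t * ((-t) ^ k * (taylor 1 p).eval (k : ℝ))) := fun k => by
    rw [taylor_eval, Nat.cast_succ]; ring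
  rw [alternatingSeries, (summable_neg_pow_mul_eval p ht).tsum_eq_zero_add, alternatingSeries,
    ← tsum_mul_left, tsum_congr hshift, tsum_neg]
  simp

end AlternatingSeries

theorem eventually_abs_lt_one_nhdsLT : ∀ᶠ t : ℝ in 𝓝[<] 1, |t| < 1 :=
  Filter.mem_of_superset (Ioo_mem_nhdsLT (by norm_num : (-1 : ℝ) < 1)) fun _ ht => abs_lt.2 ht

theorem natDegree_taylor_sub_lt {R : Type*} [CommRing R] {p : R[X]} (r : R)
    (h : taylor r p - p ≠ 0) : (taylor r p - p).natDegree < p.natDegree := by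
  have hp : taylor r p ≠ 0 := by
    intro h0
    rw [h0, (taylor_eq_zero r p).1 h0, sub_zero] at h
    exact h rfl
  exact natDegree_lt_natDegree h
    ((degree_sub_lt_left (degree_taylor p r) hp (leadingCoeff_taylor r p)).trans_eq
      (degree_taylor p r))

theorem exists_tendsto_alternatingSeries (p : ℝ[X]) :
    ∃ ℓ, Tendsto (alternatingSeries p) (𝓝[<] 1) (𝓝 ℓ) := by
  induction hn : p.natDegree using Nat.strong_induction_on generalizing p with
  | _ n ih =>
  -- `(1 + t) A_p(t) = p(0) - t A_r(t)` with `r = p(x + 1) - p(x)` of smaller degree.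
  obtain ⟨ℓ, hℓ⟩ : ∃ ℓ, Tendsto (alternatingSeries (taylor 1 p - p)) (𝓝[<] 1) (𝓝 ℓ) := by
    by_cases hr : taylor 1 p - p = 0
    · refine ⟨0, tendsto_const_nhds.congr fun t => ?_⟩
      simp [hr, alternatingSeries]
    · exact ih _ (hn ▸ natDegree_taylor_sub_lt 1 hr) _ rfl
  have hA : ∀ᶠ t in 𝓝[<] 1,
      (p.eval 0 - t * alternatingSeries (taylor 1 p - p) t) / (1 + t) = alternatingSeries p t := by
    filter_upwards [eventually_abs_lt_one_nhdsLT] with t ht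
    have h := alternatingSeries_add_mul_taylor_one p ht
    rw [← add_sub_cancel p (taylor 1 p), alternatingSeries_add _ _ ht] at h
    have : 1 + t ≠ 0 := by linarith [(abs_lt.1 ht).1]
    field_simp
    linarith
  have hid : Tendsto (fun t : ℝ => t) (𝓝[<] 1) (𝓝 1) :=
    tendsto_nhdsWithin_of_tendsto_nhds tendsto_id
  exact ⟨_, ((tendsto_const_nhds.sub (hid.mul hℓ)).div (tendsto_const_nhds.add hid)
    (by norm_num)).congr' hA⟩

theorem tendsto_alternatingSeries_of_add_taylor_one {p q : ℝ[X]} (hq : q + taylor 1 q = p) :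
    Tendsto (alternatingSeries p) (𝓝[<] 1) (𝓝 (q.eval 0)) := by
  obtain ⟨ℓ, hℓ⟩ := exists_tendsto_alternatingSeries (taylor 1 q)
  have hA : ∀ᶠ t in 𝓝[<] 1,
      q.eval 0 + (1 - t) * alternatingSeries (taylor 1 q) t = alternatingSeries p t := by
    filter_upwards [eventually_abs_lt_one_nhdsLT] with t ht
    rw [← hq, alternatingSeries_add _ _ ht, ← alternatingSeries_add_mul_taylor_one q ht]
    ring
  have hsub : Tendsto (fun t : ℝ => 1 - t) (𝓝[<] 1) (𝓝 0) :=
    ((show Continuous fun t : ℝ => 1 - t by fun_prop).tendsto' 1 0 (sub_self 1)).mono_left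
      nhdsWithin_le_nhds
  simpa using (tendsto_const_nhds.add (hsub.mul hℓ)).congr' hA

theorem bernoulliFun_one_add (k : ℕ) (x : ℝ) :
    bernoulliFun k (1 + x) = bernoulliFun k x + k * x ^ (k - 1) := by
  simpa [bernoulliFun, Polynomial.aeval_comp]
    using congr_arg (·.aeval x) (Polynomial.bernoulli_comp_one_add_X k)

noncomputable def eulerPoly (m : ℕ) : ℝ[X] :=
  C ((2 : ℝ) ^ (m + 1) / (m + 1)) *
    (((Polynomial.bernoulli (m + 1)).map (algebraMap ℚ ℝ)).comp (C 2⁻¹ * (X + 1)) -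
      ((Polynomial.bernoulli (m + 1)).map (algebraMap ℚ ℝ)).comp (C 2⁻¹ * X))

theorem eulerPoly_eval (m : ℕ) (x : ℝ) :
    (eulerPoly m).eval x = 2 ^ (m + 1) / (m + 1) *
      (bernoulliFun (m + 1) ((x + 1) / 2) - bernoulliFun (m + 1) (x / 2)) := by
  simp [eulerPoly, bernoulliFun, div_eq_inv_mul]

theorem eulerPoly_eval_add_eval_add_one (m : ℕ) (x : ℝ) :
    (eulerPoly m).eval x + (eulerPoly m).eval (x + 1) = 2 * x ^ m := by
  rw [eulerPoly_eval, eulerPoly_eval, show (x + 1 + 1) / 2 = 1 + x / 2 by ring,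
    bernoulliFun_one_add, div_pow]
  push_cast
  field_simp
  ring

theorem eulerPoly_eval_one {m : ℕ} (hm : m ≠ 0) :
    (eulerPoly m).eval 1 = 2 * (2 ^ (m + 1) - 1) * bernoulli (m + 1) / (m + 1) := by
  rw [eulerPoly_eval, show ((1 : ℝ) + 1) / 2 = 1 by norm_num, one_div, bernoulliFun_eval_one,
    bernoulliFun_eval_zero, if_neg (by omega), bernoulliFun_eval_half]
  field_simp
  ring

theorem tendsto_alternatingSeries_X_add_one_pow (m : ℕ) :
    Tendsto (alternatingSeries ((X + 1) ^ m)) (𝓝[<] 1) (𝓝 ((eulerPoly m).eval 1 / 2)) := by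
  have hq : C 2⁻¹ * taylor 1 (eulerPoly m) + taylor 1 (C 2⁻¹ * taylor 1 (eulerPoly m))
      = (X + 1) ^ m := by
    refine Polynomial.funext fun x => ?_
    simp only [eval_add, eval_mul, eval_C, taylor_eval, eval_pow, eval_X, eval_one]
    rw [← mul_add, eulerPoly_eval_add_eval_add_one]
    ring
  simpa [taylor_eval, div_eq_inv_mul] using tendsto_alternatingSeries_of_add_taylor_one hq

theorem neg_one_pow_mul_bernoulli_two_mul_pos {k : ℕ} (hk : k ≠ 0) :
    0 < (-1 : ℝ) ^ (k + 1) * bernoulli (2 * k) := by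
  have hζ := hasSum_zeta_nat hk
  have hpos := hζ.summable.tsum_pos (fun n => by positivity) 1 (by simp)
  rw [hζ.tsum_eq] at hpos
  have : 0 < (-1 : ℝ) ^ (k + 1) * bernoulli (2 * k) *
      (2 ^ (2 * k - 1) * Real.pi ^ (2 * k) / (2 * k).factorial) :=
    hpos.trans_eq (by ring)
  exact pos_of_mul_pos_left this (by positivity)

theorem tangentNum_eq_neg_one_pow_mul_bernoulli {n : ℕ} (hn : n ≠ 0) :
    tangentNum n = (-1) ^ (n + 1) * (4 ^ n - 1) * bernoulli (2 * n) / n := by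
  have habs : |(bernoulli (2 * n) : ℝ)| = (-1) ^ (n + 1) * bernoulli (2 * n) := by
    rw [← abs_of_pos (neg_one_pow_mul_bernoulli_two_mul_pos hn), abs_mul, abs_neg_one_pow, one_mul]
  rw [tangentNum, habs]
  ring

theorem tendsto_tsum_neg_one_pow_mul_pow {m : ℕ} (hm : m ≠ 0) :
    Tendsto (fun t : ℝ => ∑' k : ℕ, (-1 : ℝ) ^ (k + 1 + 1) * t ^ (k + 1) * ((k : ℝ) + 1) ^ m)
      (𝓝[<] 1) (𝓝 ((2 ^ (m + 1) - 1) * bernoulli (m + 1) / (m + 1))) := by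
  have hseries : (fun t : ℝ => ∑' k : ℕ, (-1 : ℝ) ^ (k + 1 + 1) * t ^ (k + 1) * ((k : ℝ) + 1) ^ m)
      = fun t => t * alternatingSeries ((X + 1) ^ m) t := funext fun t => by
    rw [alternatingSeries, ← tsum_mul_left]
    refine tsum_congr fun k => ?_
    simp only [eval_pow, eval_add, eval_X, eval_one]
    ring
  have hval : (2 ^ (m + 1) - 1) * (bernoulli (m + 1) : ℝ) / (m + 1)
      = 1 * ((eulerPoly m).eval 1 / 2) := by
    rw [eulerPoly_eval_one hm]
    ring
  rw [hseries, hval]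
  exact (tendsto_nhdsWithin_of_tendsto_nhds tendsto_id).mul
    (tendsto_alternatingSeries_X_add_one_pow m)

/-- Abel means of alternating power sums: for `m ≥ 1`,
`lim_{t→1⁻} Σ_{k≥1} (−1)^{k+1} t^k k^m` is `0` for even `m` and `(−1)^{n+1} t_n/2` for
`m = 2n − 1`; for each `0 < t < 1` the series converges absolutely. -/
theorem abel_mean_alternating_power_sum (m : ℕ) (hm : 1 ≤ m) :
    (∀ t ∈ Set.Ioo (0 : ℝ) 1,
      Summable fun k : ℕ => (-1 : ℝ) ^ (k + 1 + 1) * t ^ (k + 1) * ((k : ℝ) + 1) ^ m) ∧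
    (Even m →
      Filter.Tendsto
        (fun t : ℝ => ∑' k : ℕ, (-1 : ℝ) ^ (k + 1 + 1) * t ^ (k + 1) * ((k : ℝ) + 1) ^ m)
        (nhdsWithin 1 (Set.Iio 1)) (nhds 0)) ∧
    (∀ n : ℕ, 1 ≤ n → m = 2 * n - 1 →
      Filter.Tendsto
        (fun t : ℝ => ∑' k : ℕ, (-1 : ℝ) ^ (k + 1 + 1) * t ^ (k + 1) * ((k : ℝ) + 1) ^ m)
        (nhdsWithin 1 (Set.Iio 1)) (nhds ((-1 : ℝ) ^ (n + 1) * tangentNum n / 2))) := by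
  have hlim := tendsto_tsum_neg_one_pow_mul_pow (by omega : m ≠ 0)
  refine ⟨fun t ht => ?_, fun hm_even => ?_, fun n hn hmn => ?_⟩
  · have ht' : |t| < 1 := abs_lt.2 ⟨by linarith [ht.1], ht.2⟩
    refine ((summable_neg_pow_mul_eval ((X + 1) ^ m) ht').mul_left t).congr fun k => ?_
    simp only [eval_pow, eval_add, eval_X, eval_one]
    ring
  · rwa [bernoulli_eq_zero_of_odd hm_even.add_one (by omega), Rat.cast_zero, mul_zero,
      zero_div] at hlim
  · convert hlim using 2
    have hm' : (m : ℝ) + 1 = 2 * n := by exact_mod_cast (by omega : m + 1 = 2 * n)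
    have hsq : ((-1 : ℝ) ^ (n + 1)) ^ 2 = 1 := by
      rw [← pow_mul]
      exact (even_two.mul_left _).neg_one_pow
    rw [show m + 1 = 2 * n by omega, hm', tangentNum_eq_neg_one_pow_mul_bernoulli (by omega),
      pow_mul]
    field_simp
    linear_combination ((4 : ℝ) ^ n - 1) * (bernoulli (2 * n) : ℝ) * hsq
end

section
/- Let μ be a (nonnegative, Borel) measure on ℝ such that ∫ |x|^k dμ(x) < ∞ for every integer k ≥ 0, and set c_k = ∫ x^k dμ(x). Then for every m ≥ 1, det_{1≤i,j≤m}(c_{i+j−2}) = (1/m!) · ∫_{ℝ^m} Π_{1≤i<j≤m}(x_j − x_i)² dμ(x_1)⋯dμ(x_m). -/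
/-!
The square of the Vandermonde determinant is `det V · det V` with `V i j = y i ^ j`, so the theorem
is the case `f_j = g_j = x ^ j` of Andréief's identity
`∫ det (f_j (x_i)) · det (g_j (x_i)) dμ^m = m! · det (∫ f_i g_j dμ)`.
To prove the latter, expand both determinants by Leibniz: by Fubini each term `(σ, τ)` integrates
to `sign σ · sign τ · ∏_i G (σ i) (τ i)` with `G i j = ∫ f_i g_j dμ`, and for each fixed `τ` the
substitution `σ ↦ σ τ⁻¹` turns the sum over `σ` into the Leibniz expansion of `det G`.
-/

open MeasureTheory Equiv

namespace Matrix

variable {n R : Type*} [Fintype n] [DecidableEq n] [CommRing R]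

theorem det_eq_sum_sign_mul_prod_col_perm (M : Matrix n n R) :
    M.det = ∑ σ : Perm n, (Perm.sign σ : ℤ) * ∏ i, M i (σ i) := by
  rw [← M.det_transpose, det_apply']
  rfl

theorem sum_sign_mul_sign_mul_prod_eq_factorial_mul_det (G : Matrix n n R) :
    ∑ σ : Perm n, ∑ τ : Perm n, (Perm.sign σ * Perm.sign τ : ℤ) * ∏ i, G (σ i) (τ i) =
      (Fintype.card n).factorial * G.det := by
  have hsum_eq_det : ∀ τ : Perm n,
      ∑ σ : Perm n, (Perm.sign σ * Perm.sign τ : ℤ) * ∏ i, G (σ i) (τ i) = G.det := by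
    intro τ
    rw [G.det_apply']
    refine Fintype.sum_equiv (Equiv.mulRight τ⁻¹) _ _ fun σ => ?_
    rw [Equiv.coe_mulRight, ← Equiv.prod_comp τ fun i => G ((σ * τ⁻¹) i) i]
    simp [Perm.sign_mul, Perm.sign_inv]
  rw [Finset.sum_comm, Fintype.sum_congr _ _ hsum_eq_det, Finset.sum_const, Finset.card_univ,
    Fintype.card_perm, nsmul_eq_mul]

end Matrix

theorem integral_det_mul_det {n α 𝕜 : Type*} [Fintype n] [DecidableEq n] [RCLike 𝕜]
    [MeasurableSpace α] (μ : Measure α) [SigmaFinite μ] (f g : n → α → 𝕜)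
    (hfg : ∀ i j, Integrable (fun x => f i x * g j x) μ) :
    ∫ x : n → α, (Matrix.of fun i j => f j (x i)).det * (Matrix.of fun i j => g j (x i)).det
        ∂(Measure.pi fun _ => μ) =
      ((Fintype.card n).factorial : 𝕜) * (Matrix.of fun i j => ∫ x, f i x * g j x ∂μ).det := by
  have hexpand : ∀ x : n → α,
      (Matrix.of fun i j => f j (x i)).det * (Matrix.of fun i j => g j (x i)).det =
        ∑ σ : Perm n, ∑ τ : Perm n,
          (Perm.sign σ * Perm.sign τ : ℤ) * ∏ i, f (σ i) (x i) * g (τ i) (x i) := by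
    intro x
    simp only [Matrix.det_eq_sum_sign_mul_prod_col_perm, Matrix.of_apply, Finset.sum_mul_sum,
      Finset.prod_mul_distrib]
    refine Fintype.sum_congr _ _ fun σ => Fintype.sum_congr _ _ fun τ => ?_
    push_cast
    ring
  have hint : ∀ σ τ : Perm n, Integrable (fun x : n → α => ∏ i, f (σ i) (x i) * g (τ i) (x i))
      (Measure.pi fun _ => μ) := fun σ τ =>
    Integrable.fintype_prod (f := fun i x => f (σ i) x * g (τ i) x) fun i => hfg _ _
  have hfubini : ∀ σ τ : Perm n,
      ∫ x : n → α, ∏ i, f (σ i) (x i) * g (τ i) (x i) ∂(Measure.pi fun _ => μ) =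
        ∏ i, ∫ x, f (σ i) x * g (τ i) x ∂μ := fun σ τ =>
    integral_fintype_prod_eq_prod fun i x => f (σ i) x * g (τ i) x
  simp_rw [hexpand]
  rw [integral_finsetSum _ fun σ _ => integrable_finsetSum _ fun τ _ => (hint σ τ).const_mul _]
  simp_rw [integral_finsetSum _ fun τ _ => (hint _ τ).const_mul _, integral_const_mul, hfubini]
  exact Matrix.sum_sign_mul_sign_mul_prod_eq_factorial_mul_det
    (Matrix.of fun i j => ∫ x, f i x * g j x ∂μ)

theorem hankel_det_eq_integral_general (μ : Measure ℝ)
    (hμ : ∀ k : ℕ, Integrable (fun x : ℝ => |x| ^ k) μ) (m : ℕ) :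
    Matrix.det (Matrix.of fun i j : Fin m => ∫ x : ℝ, x ^ ((i : ℕ) + (j : ℕ)) ∂μ) =
      (1 / (Nat.factorial m : ℝ)) *
        ∫ y : Fin m → ℝ, (∏ i : Fin m, ∏ j ∈ Finset.Ioi i, (y j - y i)) ^ 2
          ∂(Measure.pi fun _ : Fin m => μ) := by
  have : IsFiniteMeasure μ :=
    (integrable_const_iff_isFiniteMeasure one_ne_zero).1 (by simpa using hμ 0)
  have hmoment : ∀ i j : Fin m, Integrable (fun x : ℝ => x ^ (i : ℕ) * x ^ (j : ℕ)) μ := by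
    intro i j
    simp_rw [← pow_add]
    refine (integrable_norm_iff (by fun_prop)).1 ?_
    simpa only [Real.norm_eq_abs, abs_pow] using hμ (i + j)
  have hsq_vandermonde : ∀ y : Fin m → ℝ,
      (∏ i : Fin m, ∏ j ∈ Finset.Ioi i, (y j - y i)) ^ 2 =
        (Matrix.of fun i j : Fin m => y i ^ (j : ℕ)).det *
          (Matrix.of fun i j : Fin m => y i ^ (j : ℕ)).det := fun y => by
    rw [sq, ← Matrix.det_vandermonde]
    rfl
  simp_rw [hsq_vandermonde]
  rw [integral_det_mul_det μ (fun (j : Fin m) (x : ℝ) => x ^ (j : ℕ)) _ hmoment, Fintype.card_fin,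
    one_div, inv_mul_cancel_left₀ (Nat.cast_ne_zero.2 m.factorial_ne_zero)]
  simp only [← pow_add]

/-- Heine's identity: `det(c_{i+j−2}) = (1/m!) ∫_{ℝ^m} Π_{i<j}(x_j − x_i)² dμ(x_1)⋯dμ(x_m)`,
where `c_k = ∫ x^k dμ(x)` are the moments of `μ`. -/
theorem hankel_det_eq_integral (μ : Measure ℝ)
    (hμ : ∀ k : ℕ, Integrable (fun x : ℝ => |x| ^ k) μ) (m : ℕ) (hm : 1 ≤ m) :
    Matrix.det (Matrix.of fun i j : Fin m => ∫ x : ℝ, x ^ ((i : ℕ) + (j : ℕ)) ∂μ) =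
      (1 / (Nat.factorial m : ℝ)) *
        ∫ y : Fin m → ℝ, (∏ i : Fin m, ∏ j ∈ Finset.Ioi i, (y j - y i)) ^ 2
          ∂(Measure.pi fun _ : Fin m => μ) :=
  hankel_det_eq_integral_general μ hμ m
end

section
/- Let μ and λ be (nonnegative, Borel) measures on ℝ such that ∫ |x|^k dμ(x) < ∞ and ∫ |x|^k dλ(x) < ∞ for every integer k ≥ 0. Then for every m ≥ 1, det_{1≤i,j≤m}( ∫ x^{i+j−2} d(μ+λ)(x) ) = Σ_{s=0}^{m} (1/(s!·(m−s)!)) · ∫_{ℝ^m} Π_{1≤i<j≤m}(x_j − x_i)² dλ(x_1)⋯dλ(x_s) dμ(x_{s+1})⋯dμ(x_m). -/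
/-!
Write `V y = ∏_{i<j} (y j - y i) = det (y_i ^ j)`. Expanding one factor of `V²` as
`∑_τ sgn τ ∏_i y_i ^ τ(i)` and integrating against `⊗_i κ_i` by Fubini gives
`∫ V² d(⊗ κ) = ∑_τ det (∫ x ^ (i + j) dκ_{τ j})`. By multilinearity in the columns, the Hankel
determinant of `μ + λ` is `∑_S det (∫ x ^ (i + j) dν_S j)`, where `ν_S` is `λ` on `S` and `μ` off
it. Summing the first identity over all `S` identifies `m!` times this with `∑_S ∫ V² d(⊗ ν_S)`,
and since `V²` is symmetric the summand only depends on `#S`; there are `choose m s` sets of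
size `s`.
-/

open MeasureTheory Matrix Finset Nat

section Vandermonde

variable {R : Type*} [CommRing R] {m : ℕ}

theorem prod_Ioi_sub_eq_sum_sign_mul_prod_pow (y : Fin m → R) :
    ∏ i : Fin m, ∏ j ∈ Ioi i, (y j - y i) =
      ∑ σ : Equiv.Perm (Fin m), ((Equiv.Perm.sign σ : ℤ) : R) * ∏ i, y i ^ (σ i : ℕ) := by
  rw [← det_vandermonde, ← det_transpose, det_apply']
  rfl

theorem prod_Ioi_sub_mul_prod_pow (y : Fin m → R) (e : Fin m → ℕ) :
    (∏ i : Fin m, ∏ j ∈ Ioi i, (y j - y i)) * ∏ i, y i ^ e i =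
      ∑ σ : Equiv.Perm (Fin m),
        ((Equiv.Perm.sign σ : ℤ) : R) * ∏ i, y i ^ ((σ i : ℕ) + e i) := by
  simp only [prod_Ioi_sub_eq_sum_sign_mul_prod_pow, sum_mul, mul_assoc, pow_add,
    prod_mul_distrib]

end Vandermonde

noncomputable def momentMatrix {m : ℕ} (κ : Fin m → Measure ℝ) : Matrix (Fin m) (Fin m) ℝ :=
  of fun i j => ∫ x, x ^ ((i : ℕ) + (j : ℕ)) ∂κ j

theorem det_momentMatrix_add {m : ℕ} (κ κ' : Fin m → Measure ℝ)
    (hκ : ∀ i k, Integrable (fun x : ℝ => x ^ k) (κ i))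
    (hκ' : ∀ i k, Integrable (fun x : ℝ => x ^ k) (κ' i)) :
    det (momentMatrix (κ + κ')) = ∑ S : Finset (Fin m), det (momentMatrix (S.piecewise κ κ')) := by
  have hadd : (momentMatrix (κ + κ'))ᵀ = (momentMatrix κ)ᵀ + (momentMatrix κ')ᵀ := by
    ext j i
    exact integral_add_measure (hκ j _) (hκ' j _)
  have hpiecewise : ∀ S : Finset (Fin m),
      S.piecewise (momentMatrix κ)ᵀ (momentMatrix κ')ᵀ = (momentMatrix (S.piecewise κ κ'))ᵀ := by
    intro S
    ext j i
    by_cases hj : j ∈ S <;> simp [momentMatrix, Finset.piecewise, hj]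
  have hmultilinear := (detRowAlternating : (Fin m → ℝ) [⋀^Fin m]→ₗ[ℝ] ℝ).map_add_univ
    (momentMatrix κ)ᵀ (momentMatrix κ')ᵀ
  simp_rw [hpiecewise] at hmultilinear
  rw [← det_transpose, hadd]
  exact hmultilinear.trans (sum_congr rfl fun S _ => det_transpose _)

section Integrals

variable {m : ℕ} (κ : Fin m → Measure ℝ) [∀ i, SigmaFinite (κ i)]
  (hκ : ∀ i k, Integrable (fun x : ℝ => x ^ k) (κ i))
include hκ

theorem integrable_prod_Ioi_sub_mul_prod_pow (e : Fin m → ℕ) :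
    Integrable (fun y : Fin m → ℝ => (∏ i : Fin m, ∏ j ∈ Ioi i, (y j - y i)) * ∏ i, y i ^ e i)
      (Measure.pi κ) := by
  simp_rw [prod_Ioi_sub_mul_prod_pow]
  exact integrable_finsetSum _ fun σ _ => (Integrable.fintype_prod fun i => hκ i _).const_mul _

theorem integral_prod_Ioi_sub_mul_prod_pow (e : Fin m → ℕ) :
    ∫ y : Fin m → ℝ, (∏ i : Fin m, ∏ j ∈ Ioi i, (y j - y i)) * ∏ i, y i ^ e i ∂Measure.pi κ =
      det (of fun k i : Fin m => ∫ x, x ^ ((k : ℕ) + e i) ∂κ i) := by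
  simp_rw [prod_Ioi_sub_mul_prod_pow]
  rw [integral_finsetSum _ fun σ _ => (Integrable.fintype_prod fun i => hκ i _).const_mul _,
    det_apply']
  refine sum_congr rfl fun σ _ => ?_
  rw [integral_const_mul, integral_fintype_prod_eq_prod fun i (x : ℝ) => x ^ ((σ i : ℕ) + e i)]
  rfl

theorem integral_sq_prod_Ioi_sub :
    ∫ y : Fin m → ℝ, (∏ i : Fin m, ∏ j ∈ Ioi i, (y j - y i)) ^ 2 ∂Measure.pi κ =
      ∑ τ : Equiv.Perm (Fin m), det (momentMatrix (κ ∘ τ)) := by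
  have hsq : ∀ y : Fin m → ℝ, (∏ i : Fin m, ∏ j ∈ Ioi i, (y j - y i)) ^ 2 =
      ∑ τ : Equiv.Perm (Fin m), ((Equiv.Perm.sign τ : ℤ) : ℝ) *
        ((∏ i : Fin m, ∏ j ∈ Ioi i, (y j - y i)) * ∏ i, y i ^ (τ i : ℕ)) := by
    intro y
    rw [sq]
    nth_rw 2 [prod_Ioi_sub_eq_sum_sign_mul_prod_pow]
    rw [mul_sum]
    exact sum_congr rfl fun τ _ => by ring
  have hcols : ∀ τ : Equiv.Perm (Fin m),
      of (fun k i : Fin m => ∫ x, x ^ ((k : ℕ) + (τ i : ℕ)) ∂κ i) =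
        (momentMatrix (κ ∘ ⇑τ⁻¹)).submatrix id τ := by
    intro τ
    ext k i
    simp [momentMatrix]
  simp_rw [hsq]
  rw [integral_finsetSum _ fun τ _ =>
    (integrable_prod_Ioi_sub_mul_prod_pow κ hκ _).const_mul _]
  refine Fintype.sum_equiv (Equiv.inv _) _ _ fun τ => ?_
  rw [integral_const_mul, integral_prod_Ioi_sub_mul_prod_pow κ hκ, hcols, det_permute',
    ← mul_assoc, ← Int.cast_mul, ← Units.val_mul, Int.units_mul_self]
  simp

theorem integral_sq_prod_Ioi_sub_comp_perm (σ : Equiv.Perm (Fin m)) :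
    ∫ y : Fin m → ℝ, (∏ i : Fin m, ∏ j ∈ Ioi i, (y j - y i)) ^ 2 ∂Measure.pi (κ ∘ σ) =
      ∫ y : Fin m → ℝ, (∏ i : Fin m, ∏ j ∈ Ioi i, (y j - y i)) ^ 2 ∂Measure.pi κ := by
  have (i : Fin m) : SigmaFinite ((κ ∘ σ) i) := inferInstanceAs (SigmaFinite (κ (σ i)))
  rw [integral_sq_prod_Ioi_sub (κ ∘ σ) fun i => hκ (σ i), integral_sq_prod_Ioi_sub κ hκ]
  exact Fintype.sum_equiv (Equiv.mulLeft σ) _ _ fun τ => rfl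

end Integrals

theorem exists_perm_mem_iff_lt_card {m : ℕ} (S : Finset (Fin m)) :
    ∃ σ : Equiv.Perm (Fin m), ∀ i, σ i ∈ S ↔ (i : ℕ) < #S := by
  have hcard : Fintype.card {i : Fin m // (i : ℕ) < #S} = Fintype.card {i // i ∈ S} := by
    rw [Fintype.card_subtype, Fin.card_filter_val_lt, Fintype.card_coe,
      min_eq_right (by simpa using card_le_univ S)]
  let e := Fintype.equivOfCardEq hcard
  refine ⟨e.extendSubtype, fun i => ⟨fun hi => ?_, e.extendSubtype_mem i⟩⟩
  by_contra hlt
  exact e.extendSubtype_not_mem i hlt hi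

theorem integrable_pow_of_integrable_abs_pow {ν : Measure ℝ}
    (h : ∀ k : ℕ, Integrable (fun x : ℝ => |x| ^ k) ν) (k : ℕ) :
    Integrable (fun x : ℝ => x ^ k) ν :=
  (h k).mono' (by fun_prop) (ae_of_all _ fun x => by simp)

theorem isFiniteMeasure_of_integrable_pow {ν : Measure ℝ}
    (h : ∀ k : ℕ, Integrable (fun x : ℝ => x ^ k) ν) : IsFiniteMeasure ν :=
  (integrable_const_iff_isFiniteMeasure one_ne_zero).mp (by simpa using h 0)

section PiecewiseFamily

variable {m : ℕ} {a b : Measure ℝ}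

instance sigmaFinite_piecewise_const [SigmaFinite a] [SigmaFinite b] (S : Finset (Fin m))
    (i : Fin m) : SigmaFinite (S.piecewise (fun _ => a) (fun _ => b) i) := by
  by_cases hi : i ∈ S
  · rw [piecewise_eq_of_mem _ _ _ hi]; infer_instance
  · rw [piecewise_eq_of_notMem _ _ _ hi]; infer_instance

variable (ha : ∀ k, Integrable (fun x : ℝ => x ^ k) a)
  (hb : ∀ k, Integrable (fun x : ℝ => x ^ k) b)
include ha hb

theorem integrable_pow_piecewise_const (S : Finset (Fin m)) (i : Fin m) (k : ℕ) :
    Integrable (fun x : ℝ => x ^ k) (S.piecewise (fun _ => a) (fun _ => b) i) := by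
  by_cases hi : i ∈ S
  · rw [piecewise_eq_of_mem _ _ _ hi]; exact ha k
  · rw [piecewise_eq_of_notMem _ _ _ hi]; exact hb k

variable [SigmaFinite a] [SigmaFinite b]

theorem sum_integral_sq_prod_Ioi_sub_piecewise_const :
    ∑ S : Finset (Fin m), ∫ y : Fin m → ℝ, (∏ i : Fin m, ∏ j ∈ Ioi i, (y j - y i)) ^ 2
        ∂Measure.pi (S.piecewise (fun _ => a) (fun _ => b)) =
      m ! * ∑ S : Finset (Fin m), det (momentMatrix (S.piecewise (fun _ => a) (fun _ => b))) := by
  have hperm (τ : Equiv.Perm (Fin m)) :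
      ∑ S : Finset (Fin m), det (momentMatrix (S.piecewise (fun _ => a) (fun _ => b) ∘ τ)) =
        ∑ S : Finset (Fin m), det (momentMatrix (S.piecewise (fun _ => a) (fun _ => b))) := by
    refine Fintype.sum_equiv τ.symm.finsetCongr _ _ fun S => ?_
    congr 2
    ext1 i
    simp [Finset.piecewise]
  calc _ = ∑ S : Finset (Fin m), ∑ τ : Equiv.Perm (Fin m),
        det (momentMatrix (S.piecewise (fun _ => a) (fun _ => b) ∘ τ)) :=
      sum_congr rfl fun S _ =>
        integral_sq_prod_Ioi_sub _ (integrable_pow_piecewise_const ha hb S)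
    _ = _ := by
      rw [sum_comm, sum_congr rfl fun τ _ => hperm τ, sum_const, Finset.card_univ,
        Fintype.card_perm, Fintype.card_fin, nsmul_eq_mul]

theorem integral_sq_prod_Ioi_sub_piecewise_const (S : Finset (Fin m)) :
    ∫ y : Fin m → ℝ, (∏ i : Fin m, ∏ j ∈ Ioi i, (y j - y i)) ^ 2
        ∂Measure.pi (S.piecewise (fun _ => a) (fun _ => b)) =
      ∫ y : Fin m → ℝ, (∏ i : Fin m, ∏ j ∈ Ioi i, (y j - y i)) ^ 2
        ∂Measure.pi (fun i : Fin m => if (i : ℕ) < #S then a else b) := by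
  obtain ⟨σ, hσ⟩ := exists_perm_mem_iff_lt_card S
  have hcomp : (fun i : Fin m => if (i : ℕ) < #S then a else b) =
      S.piecewise (fun _ => a) (fun _ => b) ∘ σ := by
    ext1 i
    simp [Finset.piecewise, hσ]
  rw [hcomp, integral_sq_prod_Ioi_sub_comp_perm _ (integrable_pow_piecewise_const ha hb S)]

theorem factorial_mul_sum_det_momentMatrix_piecewise_const :
    m ! * ∑ S : Finset (Fin m), det (momentMatrix (S.piecewise (fun _ => a) (fun _ => b))) =
      ∑ s ∈ range (m + 1), (m.choose s : ℝ) *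
        ∫ y : Fin m → ℝ, (∏ i : Fin m, ∏ j ∈ Ioi i, (y j - y i)) ^ 2
          ∂Measure.pi (fun i : Fin m => if (i : ℕ) < s then a else b) := by
  let I : ℕ → ℝ := fun s => ∫ y : Fin m → ℝ, (∏ i : Fin m, ∏ j ∈ Ioi i, (y j - y i)) ^ 2
    ∂Measure.pi (fun i : Fin m => if (i : ℕ) < s then a else b)
  calc _ = ∑ S ∈ (univ : Finset (Fin m)).powerset, I #S := by
        rw [← sum_integral_sq_prod_Ioi_sub_piecewise_const ha hb, powerset_univ]
        exact sum_congr rfl fun S _ => integral_sq_prod_Ioi_sub_piecewise_const ha hb S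
    _ = _ := by
        rw [sum_powerset_apply_card, Finset.card_univ, Fintype.card_fin]
        simp_rw [nsmul_eq_mul]
        rfl

end PiecewiseFamily

theorem hankel_det_add_eq_sum_general (μ lam : Measure ℝ)
    (hμ : ∀ k : ℕ, Integrable (fun x : ℝ => |x| ^ k) μ)
    (hlam : ∀ k : ℕ, Integrable (fun x : ℝ => |x| ^ k) lam)
    (m : ℕ) :
    Matrix.det (Matrix.of fun i j : Fin m => ∫ x : ℝ, x ^ ((i : ℕ) + (j : ℕ)) ∂(μ + lam)) =
      ∑ s ∈ Finset.range (m + 1),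
        (1 / ((Nat.factorial s : ℝ) * (Nat.factorial (m - s) : ℝ))) *
          ∫ y : Fin m → ℝ, (∏ i : Fin m, ∏ j ∈ Finset.Ioi i, (y j - y i)) ^ 2
            ∂(Measure.pi fun i : Fin m => if (i : ℕ) < s then lam else μ) := by
  have hμ' := integrable_pow_of_integrable_abs_pow hμ
  have hlam' := integrable_pow_of_integrable_abs_pow hlam
  have := isFiniteMeasure_of_integrable_pow hμ'
  have := isFiniteMeasure_of_integrable_pow hlam'
  have hexpand : det (of fun i j : Fin m => ∫ x : ℝ, x ^ ((i : ℕ) + (j : ℕ)) ∂(μ + lam)) =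
      ∑ S : Finset (Fin m), det (momentMatrix (S.piecewise (fun _ => lam) (fun _ => μ))) := by
    rw [add_comm μ lam]
    exact det_momentMatrix_add _ _ (fun _ => hlam') (fun _ => hμ')
  rw [hexpand, ← mul_right_inj' (by positivity : (m ! : ℝ) ≠ 0),
    factorial_mul_sum_det_momentMatrix_piecewise_const hlam' hμ', mul_sum]
  refine sum_congr rfl fun s hs => ?_
  rw [Nat.cast_choose ℝ (Nat.lt_succ_iff.mp (mem_range.mp hs))]
  field_simp

/-- Hankel determinant of a sum of two measures:
`det(∫ x^{i+j−2} d(μ+λ)) = Σ_{s=0}^{m} (1/(s!(m−s)!)) ∫ Π_{i<j}(x_j−x_i)²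
  dλ(x_1)⋯dλ(x_s) dμ(x_{s+1})⋯dμ(x_m)`. -/
theorem hankel_det_add_eq_sum (μ lam : Measure ℝ)
    (hμ : ∀ k : ℕ, Integrable (fun x : ℝ => |x| ^ k) μ)
    (hlam : ∀ k : ℕ, Integrable (fun x : ℝ => |x| ^ k) lam)
    (m : ℕ) (hm : 1 ≤ m) :
    Matrix.det (Matrix.of fun i j : Fin m => ∫ x : ℝ, x ^ ((i : ℕ) + (j : ℕ)) ∂(μ + lam)) =
      ∑ s ∈ Finset.range (m + 1),
        (1 / ((Nat.factorial s : ℝ) * (Nat.factorial (m - s) : ℝ))) *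
          ∫ y : Fin m → ℝ, (∏ i : Fin m, ∏ j ∈ Finset.Ioi i, (y j - y i)) ^ 2
            ∂(Measure.pi fun i : Fin m => if (i : ℕ) < s then lam else μ) :=
  hankel_det_add_eq_sum_general μ lam hμ hlam m
end
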